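/- arXiv:1102.1902 — 4 statements merged into one kernel-verified Lean document; each statement's English description precedes it below -/
import Mathlib

section
/- Let N ∈ ℕ, let A_k : ℝ → ℂ (−N ≤ k ≤ N) be differentiable functions of t, define φ(α ± iζ, t) = Σ_{k=−N}^{N} A_k(t) e^{ikα} e^{∓kζ}, Λφ(α ± iζ, t) = Σ_{k=−N}^{N} |k| A_k(t) e^{ikα} e^{∓kζ}, and φ_t(α ± iζ, t) = Σ_{k=−N}^{N} A_k'(t) e^{ikα} e^{∓kζ}, and let h : ℝ → (0,∞) be differentiable and decreasing. Then (d/dt) Σ_± ∫_𝕋 |φ(α ± ih(t), t)|² dα ≤ (h'(t)/10) Σ_± ∫_𝕋 Λφ(α ± ih(t), t) · conj(φ(α ± ih(t), t)) dα − 10 h'(t) ∫_𝕋 Λφ(α, t) · conj(φ(α, t)) dα + 2 Re Σ_± ∫_𝕋 φ_t(α ± ih(t), t) · conj(φ(α ± ih(t), t)) dα. -/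
open Real MeasureTheory Set

noncomputable section

/-- `φ(α + iζ, t) = Σ_{k=-N}^{N} A_k(t) e^{ikα} e^{-kζ}` (the `+` line). -/
def phiP (N : ℕ) (A : ℤ → ℝ → ℂ) (ζ t α : ℝ) : ℂ :=
  ∑ k ∈ Finset.Icc (-(N : ℤ)) (N : ℤ),
    A k t * Complex.exp (Complex.I * (k : ℂ) * (α : ℂ)) * Complex.exp (-(k : ℂ) * (ζ : ℂ))

/-- `φ(α - iζ, t) = Σ_{k=-N}^{N} A_k(t) e^{ikα} e^{kζ}` (the `-` line). -/
def phiM (N : ℕ) (A : ℤ → ℝ → ℂ) (ζ t α : ℝ) : ℂ :=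
  ∑ k ∈ Finset.Icc (-(N : ℤ)) (N : ℤ),
    A k t * Complex.exp (Complex.I * (k : ℂ) * (α : ℂ)) * Complex.exp ((k : ℂ) * (ζ : ℂ))

/-- `Λφ(α + iζ, t)`. -/
def lamP (N : ℕ) (A : ℤ → ℝ → ℂ) (ζ t α : ℝ) : ℂ :=
  ∑ k ∈ Finset.Icc (-(N : ℤ)) (N : ℤ),
    ((|k| : ℤ) : ℂ) * A k t * Complex.exp (Complex.I * (k : ℂ) * (α : ℂ))
      * Complex.exp (-(k : ℂ) * (ζ : ℂ))

/-- `Λφ(α - iζ, t)`. -/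
def lamM (N : ℕ) (A : ℤ → ℝ → ℂ) (ζ t α : ℝ) : ℂ :=
  ∑ k ∈ Finset.Icc (-(N : ℤ)) (N : ℤ),
    ((|k| : ℤ) : ℂ) * A k t * Complex.exp (Complex.I * (k : ℂ) * (α : ℂ))
      * Complex.exp ((k : ℂ) * (ζ : ℂ))

/-- `φ_t(α + iζ, t) = Σ_{k=-N}^{N} A_k'(t) e^{ikα} e^{-kζ}`. -/
def phiPt (N : ℕ) (A : ℤ → ℝ → ℂ) (ζ t α : ℝ) : ℂ :=
  ∑ k ∈ Finset.Icc (-(N : ℤ)) (N : ℤ),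
    deriv (A k) t * Complex.exp (Complex.I * (k : ℂ) * (α : ℂ))
      * Complex.exp (-(k : ℂ) * (ζ : ℂ))

/-- `φ_t(α - iζ, t)`. -/
def phiMt (N : ℕ) (A : ℤ → ℝ → ℂ) (ζ t α : ℝ) : ℂ :=
  ∑ k ∈ Finset.Icc (-(N : ℤ)) (N : ℤ),
    deriv (A k) t * Complex.exp (Complex.I * (k : ℂ) * (α : ℂ))
      * Complex.exp ((k : ℂ) * (ζ : ℂ))


namespace StripAux

lemma int_exp_int (m : ℤ) :
    (∫ α in (-π)..π, Complex.exp (Complex.I * (m : ℂ) * (α : ℂ)))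
      = if m = 0 then (2 * π : ℂ) else 0 := by
  rcases eq_or_ne m 0 with hm | hm
  · simp [hm, two_mul]
  · have hc : (Complex.I * (m : ℂ)) ≠ 0 := by
      simp [Complex.I_ne_zero, Complex.ext_iff]
      exact_mod_cast hm
    rw [integral_exp_mul_complex hc]
    simp only [if_neg hm]
    have : Complex.exp (Complex.I * (m : ℂ) * (π : ℂ))
        = Complex.exp (Complex.I * (m : ℂ) * ((-π : ℝ) : ℂ)) := by
      rw [Complex.exp_eq_exp_iff_exists_int]
      exact ⟨m, by push_cast; ring⟩
    rw [this, sub_self, zero_div]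

/-- trig polynomial -/
noncomputable def TP (S : Finset ℤ) (B : ℤ → ℂ) (α : ℝ) : ℂ :=
  ∑ k ∈ S, B k * Complex.exp (Complex.I * (k : ℂ) * (α : ℂ))

lemma cont_term (c : ℂ) (m : ℤ) :
    Continuous fun α : ℝ => c * Complex.exp (Complex.I * (m : ℂ) * (α : ℂ)) :=
  continuous_const.mul (Complex.continuous_exp.comp (continuous_const.mul Complex.continuous_ofReal))

lemma tp_cont (S : Finset ℤ) (B : ℤ → ℂ) : Continuous (TP S B) :=
  continuous_finset_sum _ fun k _ => cont_term _ _

lemma orth (S : Finset ℤ) (B C : ℤ → ℂ) :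
    (∫ α in (-π)..π, TP S B α * star (TP S C α)) = 2 * π * ∑ k ∈ S, B k * star (C k) := by
  have key : ∀ α : ℝ, TP S B α * star (TP S C α)
      = ∑ k ∈ S, ∑ j ∈ S, (B k * star (C j)) *
          Complex.exp (Complex.I * ((k - j : ℤ) : ℂ) * (α : ℂ)) := by
    intro α
    rw [TP, TP, star_sum, Finset.sum_mul_sum]
    refine Finset.sum_congr rfl fun k _ => Finset.sum_congr rfl fun j _ => ?_
    have hs : star (Complex.exp (Complex.I * (j : ℂ) * (α : ℂ)))
        = Complex.exp (-(Complex.I * (j : ℂ) * (α : ℂ))) := by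
      rw [Complex.star_def, ← Complex.exp_conj]
      congr 1
      simp [Complex.ext_iff]
    rw [star_mul', hs, mul_mul_mul_comm, ← Complex.exp_add]
    congr 2
    push_cast
    ring
  simp only [key]
  rw [intervalIntegral.integral_finset_sum]
  · rw [Finset.mul_sum]
    refine Finset.sum_congr rfl fun k hk => ?_
    rw [intervalIntegral.integral_finset_sum]
    · have : ∀ j ∈ S, (∫ α in (-π)..π, (B k * star (C j)) *
          Complex.exp (Complex.I * ((k - j : ℤ) : ℂ) * (α : ℂ)))
          = if j = k then 2 * π * (B k * star (C k)) else 0 := by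
        intro j _
        rw [intervalIntegral.integral_const_mul, int_exp_int]
        rcases eq_or_ne j k with hj | hj
        · simp [hj]; ring
        · rw [if_neg (sub_ne_zero.mpr fun h => hj h.symm), if_neg hj, mul_zero]
      rw [Finset.sum_congr rfl this, Finset.sum_ite_eq' S k, if_pos hk]
    · exact fun j _ => (cont_term _ _).intervalIntegrable _ _
  · exact fun k _ =>
      (continuous_finset_sum _ fun j _ => cont_term _ _).intervalIntegrable _ _

lemma norm_sq_eq_re_mul_star (z : ℂ) : ‖z‖ ^ 2 = (z * star z).re := by
  rw [Complex.star_def, Complex.mul_conj]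
  rw [Complex.sq_norm]
  simp

lemma norm_sq_int (S : Finset ℤ) (B : ℤ → ℂ) :
    (∫ α in (-π)..π, ‖TP S B α‖ ^ 2) = 2 * π * ∑ k ∈ S, ‖B k‖ ^ 2 := by
  have hi : IntervalIntegrable (fun α => TP S B α * star (TP S B α)) volume (-π) π :=
    ((tp_cont S B).mul (continuous_star.comp (tp_cont S B))).intervalIntegrable _ _
  have h1 : (∫ α in (-π)..π, ‖TP S B α‖ ^ 2)
      = (∫ α in (-π)..π, TP S B α * star (TP S B α)).re := by
    rw [show (∫ α in (-π)..π, TP S B α * star (TP S B α)).re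
        = Complex.reCLM (∫ α in (-π)..π, TP S B α * star (TP S B α)) from rfl,
      ← Complex.reCLM.intervalIntegral_comp_comm hi]
    simp only [Complex.reCLM_apply, ← norm_sq_eq_re_mul_star]
  rw [h1, orth]
  have h2 : ∑ k ∈ S, B k * star (B k) = ((∑ k ∈ S, ‖B k‖ ^ 2 : ℝ) : ℂ) := by
    rw [Complex.ofReal_sum]
    refine Finset.sum_congr rfl fun k _ => ?_
    rw [Complex.star_def, Complex.mul_conj]
    norm_cast
    rw [Complex.sq_norm]
  rw [h2, show ((2:ℂ) * (π:ℝ) * ((∑ k ∈ S, ‖B k‖ ^ 2 : ℝ) : ℂ))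
      = (((2 * π * ∑ k ∈ S, ‖B k‖ ^ 2 : ℝ)) : ℂ) by push_cast; ring, Complex.ofReal_re]

lemma scalar0 (m H' u : ℝ) (hm : 0 ≤ m) (hH : H' ≤ 0) (hu : 0 ≤ u) :
    2 * m * H' * (Real.exp u - Real.exp (-u))
      ≤ m * ((H' / 10) * (Real.exp (-u) + Real.exp u) - 10 * H') := by
  have h1 : Real.exp (-u) ≤ 1 := Real.exp_le_one_iff.mpr (by linarith)
  have h2 : 1 ≤ Real.exp u := Real.one_le_exp_iff.mpr hu
  have hB : 0 ≤ 2 * (Real.exp u - Real.exp (-u)) -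
      ((1 / 10) * (Real.exp (-u) + Real.exp u) - 10) := by nlinarith
  nlinarith [mul_nonneg hm hB]
end StripAux

namespace StripAux
open Complex in
lemma term_re1 (m : ℤ) (z : ℂ) (r : ℝ) :
    (((m : ℂ) * z * (r : ℂ)) * star (z * (r : ℂ))).re = (m : ℝ) * ‖z‖ ^ 2 * r ^ 2 := by
  rw [Complex.star_def, map_mul, Complex.conj_ofReal,
    show ((m : ℂ) * z * (r : ℂ)) * ((starRingEnd ℂ) z * (r : ℂ))
      = ((m : ℂ) * (r : ℂ) * (r : ℂ)) * (z * (starRingEnd ℂ) z) by ring,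
    Complex.mul_conj,
    show ((m : ℂ) * (r : ℂ) * (r : ℂ)) * ((Complex.normSq z : ℝ) : ℂ)
      = (((m : ℝ) * r * r * Complex.normSq z : ℝ) : ℂ) by push_cast; ring,
    Complex.ofReal_re]
  rw [show Complex.normSq z = ‖z‖ ^ 2 by rw [Complex.sq_norm]]
  ring

lemma term_re2 (w z : ℂ) (r : ℝ) :
    ((w * (r : ℂ)) * star (z * (r : ℂ))).re = (w * star z).re * r ^ 2 := by
  rw [Complex.star_def, map_mul, Complex.conj_ofReal,
    show (w * (r : ℂ)) * ((starRingEnd ℂ) z * (r : ℂ))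
      = (w * (starRingEnd ℂ) z) * (((r * r : ℝ) : ℝ) : ℂ) by push_cast; ring]
  rw [Complex.mul_re, Complex.ofReal_re, Complex.ofReal_im]
  ring

lemma orth_re (S : Finset ℤ) (B C : ℤ → ℂ) :
    (∫ α in (-π)..π, TP S B α * star (TP S C α)).re
      = 2 * π * ∑ k ∈ S, (B k * star (C k)).re := by
  rw [orth, show ((2 : ℂ) * (π : ℝ) * ∑ k ∈ S, B k * star (C k))
      = (((2 * π : ℝ)) : ℂ) * ∑ k ∈ S, B k * star (C k) by push_cast; ring,
    Complex.re_ofReal_mul, Complex.re_sum]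

lemma sq_exp (x : ℝ) : Real.exp x ^ 2 = Real.exp (2 * x) := by
  rw [sq, ← Real.exp_add]; congr 1; ring

lemma scalar (k : ℤ) (ζ H' : ℝ) (hζ : 0 ≤ ζ) (hH : H' ≤ 0) :
    2 * (k : ℝ) * H' * (Real.exp (2 * (k : ℝ) * ζ) - Real.exp (-2 * (k : ℝ) * ζ))
      ≤ |(k : ℝ)| * ((H' / 10) * (Real.exp (-2 * (k : ℝ) * ζ) + Real.exp (2 * (k : ℝ) * ζ))
          - 10 * H') := by
  rcases le_or_gt 0 (k : ℝ) with hk | hk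
  · rw [abs_of_nonneg hk]
    have h := scalar0 (k : ℝ) H' (2 * (k : ℝ) * ζ) hk hH (by positivity)
    rw [show -(2 * (k : ℝ) * ζ) = -2 * (k : ℝ) * ζ by ring] at h
    linarith
  · rw [abs_of_neg hk]
    have h := scalar0 (-(k : ℝ)) H' (-2 * (k : ℝ) * ζ) (by linarith) hH (by nlinarith)
    rw [show -(-2 * (k : ℝ) * ζ) = 2 * (k : ℝ) * ζ by ring] at h
    calc 2 * (k : ℝ) * H' * (Real.exp (2 * (k : ℝ) * ζ) - Real.exp (-2 * (k : ℝ) * ζ))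
        = 2 * (-(k : ℝ)) * H' * (Real.exp (-2 * (k : ℝ) * ζ) - Real.exp (2 * (k : ℝ) * ζ)) := by
          ring
      _ ≤ (-(k : ℝ)) * ((H' / 10) * (Real.exp (2 * (k : ℝ) * ζ) + Real.exp (-2 * (k : ℝ) * ζ))
            - 10 * H') := h
      _ = -(k : ℝ) * ((H' / 10) * (Real.exp (-2 * (k : ℝ) * ζ) + Real.exp (2 * (k : ℝ) * ζ))
            - 10 * H') := by ring
end StripAux


namespace StripAux

lemma exp_coe (k : ℤ) (ζ : ℝ) :
    Complex.exp (-(k : ℂ) * (ζ : ℂ)) = ((Real.exp (-(k : ℝ) * ζ) : ℝ) : ℂ) := by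
  rw [Complex.ofReal_exp]; congr 1; push_cast; ring

lemma exp_coe' (k : ℤ) (ζ : ℝ) :
    Complex.exp ((k : ℂ) * (ζ : ℂ)) = ((Real.exp ((k : ℝ) * ζ) : ℝ) : ℂ) := by
  rw [Complex.ofReal_exp]; congr 1; push_cast; ring

lemma phiP_eq (N : ℕ) (A : ℤ → ℝ → ℂ) (ζ t α : ℝ) :
    phiP N A ζ t α = TP (Finset.Icc (-(N : ℤ)) (N : ℤ))
      (fun k => A k t * ((Real.exp (-(k : ℝ) * ζ) : ℝ) : ℂ)) α := by
  refine Finset.sum_congr rfl fun k _ => ?_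
  rw [mul_right_comm, exp_coe]

lemma phiM_eq (N : ℕ) (A : ℤ → ℝ → ℂ) (ζ t α : ℝ) :
    phiM N A ζ t α = TP (Finset.Icc (-(N : ℤ)) (N : ℤ))
      (fun k => A k t * ((Real.exp ((k : ℝ) * ζ) : ℝ) : ℂ)) α := by
  refine Finset.sum_congr rfl fun k _ => ?_
  rw [mul_right_comm, exp_coe']

lemma lamP_eq (N : ℕ) (A : ℤ → ℝ → ℂ) (ζ t α : ℝ) :
    lamP N A ζ t α = TP (Finset.Icc (-(N : ℤ)) (N : ℤ))
      (fun k => ((|k| : ℤ) : ℂ) * A k t * ((Real.exp (-(k : ℝ) * ζ) : ℝ) : ℂ)) α := by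
  refine Finset.sum_congr rfl fun k _ => ?_
  rw [mul_right_comm, exp_coe]

lemma lamM_eq (N : ℕ) (A : ℤ → ℝ → ℂ) (ζ t α : ℝ) :
    lamM N A ζ t α = TP (Finset.Icc (-(N : ℤ)) (N : ℤ))
      (fun k => ((|k| : ℤ) : ℂ) * A k t * ((Real.exp ((k : ℝ) * ζ) : ℝ) : ℂ)) α := by
  refine Finset.sum_congr rfl fun k _ => ?_
  rw [mul_right_comm, exp_coe']

lemma phiPt_eq (N : ℕ) (A : ℤ → ℝ → ℂ) (ζ t α : ℝ) :
    phiPt N A ζ t α = TP (Finset.Icc (-(N : ℤ)) (N : ℤ))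
      (fun k => deriv (A k) t * ((Real.exp (-(k : ℝ) * ζ) : ℝ) : ℂ)) α := by
  refine Finset.sum_congr rfl fun k _ => ?_
  rw [mul_right_comm, exp_coe]

lemma phiMt_eq (N : ℕ) (A : ℤ → ℝ → ℂ) (ζ t α : ℝ) :
    phiMt N A ζ t α = TP (Finset.Icc (-(N : ℤ)) (N : ℤ))
      (fun k => deriv (A k) t * ((Real.exp ((k : ℝ) * ζ) : ℝ) : ℂ)) α := by
  refine Finset.sum_congr rfl fun k _ => ?_
  rw [mul_right_comm, exp_coe']

end StripAux

open StripAux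

/-- For a time-dependent trigonometric polynomial and a decreasing positive `h`,
`(d/dt) Σ_± ∫_𝕋 |φ(α ± ih(t), t)|² dα
  ≤ (h'(t)/10) Σ_± ∫_𝕋 Λφ conj(φ) dα − 10 h'(t) ∫_𝕋 Λφ(α,t) conj(φ(α,t)) dα
    + 2 Re Σ_± ∫_𝕋 φ_t conj(φ) dα`. -/
theorem strip_energy_time_derivative_bound (N : ℕ) (A : ℤ → ℝ → ℂ)
    (hA : ∀ k, Differentiable ℝ (A k)) (h : ℝ → ℝ) (hdiff : Differentiable ℝ h)
    (hanti : Antitone h) (hpos : ∀ t, 0 < h t) (t : ℝ) :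
    ∃ d : ℝ,
      HasDerivAt (fun s : ℝ =>
        (∫ α in (-π)..π, ‖phiP N A (h s) s α‖ ^ 2)
          + ∫ α in (-π)..π, ‖phiM N A (h s) s α‖ ^ 2) d t ∧
      d ≤ (deriv h t / 10) *
            ((∫ α in (-π)..π, lamP N A (h t) t α * star (phiP N A (h t) t α))
              + ∫ α in (-π)..π, lamM N A (h t) t α * star (phiM N A (h t) t α)).re
          - 10 * deriv h t *
            (∫ α in (-π)..π, lamP N A 0 t α * star (phiP N A 0 t α)).re
          + 2 * ((∫ α in (-π)..π, phiPt N A (h t) t α * star (phiP N A (h t) t α))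
              + ∫ α in (-π)..π, phiMt N A (h t) t α * star (phiM N A (h t) t α)).re := by
  classical
  set S : Finset ℤ := Finset.Icc (-(N : ℤ)) (N : ℤ) with hSdef
  -- derivative of h is nonpositive
  have hH' : deriv h t ≤ 0 := by
    have H : HasDerivAt h (deriv h t) t := (hdiff t).hasDerivAt
    have hT : Filter.Tendsto (slope h t) (nhdsWithin t (Set.Ioi t)) (nhds (deriv h t)) :=
      (hasDerivAt_iff_tendsto_slope.1 H).mono_left
        (nhdsWithin_mono t fun x hx => ne_of_gt hx)
    refine le_of_tendsto hT ?_
    filter_upwards [self_mem_nhdsWithin] with x hx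
    have hx' : t < x := hx
    rw [slope_def_field]
    apply div_nonpos_of_nonpos_of_nonneg
    · have := hanti hx'.le
      linarith
    · linarith
  -- derivative of the squared norm of A k
  have hnorm : ∀ k : ℤ, HasDerivAt (fun s => ‖A k s‖ ^ 2)
      (2 * ((deriv (A k) t) * star (A k t)).re) t := by
    intro k
    have h1 : HasDerivAt (A k) (deriv (A k) t) t := ((hA k) t).hasDerivAt
    have h2 : HasDerivAt (fun s => star (A k s)) (star (deriv (A k) t)) t := by
      exact h1.star
    have h3 := h1.mul h2
    have h4 := Complex.reCLM.hasFDerivAt.comp_hasDerivAt t h3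
    simp only [Function.comp_def, Complex.reCLM_apply] at h4
    have hfun : (fun s => ‖A k s‖ ^ 2) = fun s => (A k s * star (A k s)).re :=
      funext fun s => norm_sq_eq_re_mul_star _
    rw [hfun]
    refine h4.congr_deriv ?_
    rw [Complex.add_re,
      show A k t * star (deriv (A k) t) = star (deriv (A k) t * star (A k t)) by
        rw [star_mul, star_star],
      Complex.star_def, Complex.conj_re]
    ring
  have hexp : ∀ c : ℝ, HasDerivAt (fun s => Real.exp (c * h s))
      (Real.exp (c * h t) * (c * deriv h t)) t :=
    fun c => ((hdiff t).hasDerivAt.const_mul c).exp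
  -- the energy as an explicit function
  have hE : ∀ s : ℝ,
      ((∫ α in (-π)..π, ‖phiP N A (h s) s α‖ ^ 2)
        + ∫ α in (-π)..π, ‖phiM N A (h s) s α‖ ^ 2)
      = 2 * π * ∑ k ∈ S, ‖A k s‖ ^ 2 *
          (Real.exp (-2 * (k : ℝ) * h s) + Real.exp (2 * (k : ℝ) * h s)) := by
    intro s
    simp only [phiP_eq, phiM_eq]
    rw [norm_sq_int, norm_sq_int, ← mul_add, ← Finset.sum_add_distrib]
    congr 1
    refine Finset.sum_congr rfl fun k _ => ?_
    rw [norm_mul, norm_mul, Complex.norm_real, Complex.norm_real,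
      Real.norm_eq_abs, Real.norm_eq_abs,
      abs_of_pos (Real.exp_pos _), abs_of_pos (Real.exp_pos _), mul_pow, mul_pow,
      sq_exp, sq_exp,
      show 2 * (-(k : ℝ) * h s) = -2 * (k : ℝ) * h s by ring,
      show 2 * ((k : ℝ) * h s) = 2 * (k : ℝ) * h s by ring]
    ring
  refine ⟨2 * π * ∑ k ∈ S,
      (2 * ((deriv (A k) t) * star (A k t)).re *
          (Real.exp (-2 * (k : ℝ) * h t) + Real.exp (2 * (k : ℝ) * h t))
        + ‖A k t‖ ^ 2 *
          (Real.exp (-2 * (k : ℝ) * h t) * (-2 * (k : ℝ) * deriv h t)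
            + Real.exp (2 * (k : ℝ) * h t) * (2 * (k : ℝ) * deriv h t))), ?_, ?_⟩
  · simp only [hE]
    exact HasDerivAt.const_mul _ (HasDerivAt.fun_sum fun k _ =>
      (hnorm k).mul ((hexp (-2 * (k : ℝ))).add (hexp (2 * (k : ℝ)))))
  · -- rewrite the right-hand side integrals
    have e1 : (∫ α in (-π)..π, lamP N A (h t) t α * star (phiP N A (h t) t α)).re
        = 2 * π * ∑ k ∈ S, ((|k| : ℤ) : ℝ) * ‖A k t‖ ^ 2 * (Real.exp (-(k : ℝ) * h t)) ^ 2 := by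
      simp only [lamP_eq, phiP_eq]
      rw [orth_re]
      exact congrArg _ (Finset.sum_congr rfl fun k _ => term_re1 _ _ _)
    have e2 : (∫ α in (-π)..π, lamM N A (h t) t α * star (phiM N A (h t) t α)).re
        = 2 * π * ∑ k ∈ S, ((|k| : ℤ) : ℝ) * ‖A k t‖ ^ 2 * (Real.exp ((k : ℝ) * h t)) ^ 2 := by
      simp only [lamM_eq, phiM_eq]
      rw [orth_re]
      exact congrArg _ (Finset.sum_congr rfl fun k _ => term_re1 _ _ _)
    have e3 : (∫ α in (-π)..π, lamP N A 0 t α * star (phiP N A 0 t α)).re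
        = 2 * π * ∑ k ∈ S, ((|k| : ℤ) : ℝ) * ‖A k t‖ ^ 2 * (Real.exp (-(k : ℝ) * 0)) ^ 2 := by
      simp only [lamP_eq, phiP_eq]
      rw [orth_re]
      exact congrArg _ (Finset.sum_congr rfl fun k _ => term_re1 _ _ _)
    have e4 : (∫ α in (-π)..π, phiPt N A (h t) t α * star (phiP N A (h t) t α)).re
        = 2 * π * ∑ k ∈ S, ((deriv (A k) t) * star (A k t)).re * (Real.exp (-(k : ℝ) * h t)) ^ 2 := by
      simp only [phiPt_eq, phiP_eq]
      rw [orth_re]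
      exact congrArg _ (Finset.sum_congr rfl fun k _ => term_re2 _ _ _)
    have e5 : (∫ α in (-π)..π, phiMt N A (h t) t α * star (phiM N A (h t) t α)).re
        = 2 * π * ∑ k ∈ S, ((deriv (A k) t) * star (A k t)).re * (Real.exp ((k : ℝ) * h t)) ^ 2 := by
      simp only [phiMt_eq, phiM_eq]
      rw [orth_re]
      exact congrArg _ (Finset.sum_congr rfl fun k _ => term_re2 _ _ _)
    rw [Complex.add_re, Complex.add_re, e1, e2, e3, e4, e5]
    have hcomb : (deriv h t / 10) *
          (2 * π * ∑ k ∈ S, ((|k| : ℤ) : ℝ) * ‖A k t‖ ^ 2 * (Real.exp (-(k : ℝ) * h t)) ^ 2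
            + 2 * π * ∑ k ∈ S, ((|k| : ℤ) : ℝ) * ‖A k t‖ ^ 2 * (Real.exp ((k : ℝ) * h t)) ^ 2)
        - 10 * deriv h t *
          (2 * π * ∑ k ∈ S, ((|k| : ℤ) : ℝ) * ‖A k t‖ ^ 2 * (Real.exp (-(k : ℝ) * 0)) ^ 2)
        + 2 * (2 * π * ∑ k ∈ S, ((deriv (A k) t) * star (A k t)).re * (Real.exp (-(k : ℝ) * h t)) ^ 2
            + 2 * π * ∑ k ∈ S, ((deriv (A k) t) * star (A k t)).re * (Real.exp ((k : ℝ) * h t)) ^ 2)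
      = 2 * π * ∑ k ∈ S,
          ((deriv h t / 10) * (((|k| : ℤ) : ℝ) * ‖A k t‖ ^ 2 * ((Real.exp (-(k : ℝ) * h t)) ^ 2
              + (Real.exp ((k : ℝ) * h t)) ^ 2))
            - 10 * deriv h t * (((|k| : ℤ) : ℝ) * ‖A k t‖ ^ 2 * (Real.exp (-(k : ℝ) * 0)) ^ 2)
            + 2 * (((deriv (A k) t) * star (A k t)).re * ((Real.exp (-(k : ℝ) * h t)) ^ 2
              + (Real.exp ((k : ℝ) * h t)) ^ 2))) := by
      simp only [mul_add, mul_sub, Finset.sum_add_distrib, Finset.sum_sub_distrib,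
        ← Finset.mul_sum]
      ring
    rw [hcomb]
    refine mul_le_mul_of_nonneg_left (Finset.sum_le_sum fun k _ => ?_) (by positivity)
    have hck : (0 : ℝ) ≤ ‖A k t‖ ^ 2 := by positivity
    have hs := scalar k (h t) (deriv h t) (hpos t).le hH'
    have hint := mul_le_mul_of_nonneg_left hs hck
    have e01 : (Real.exp (-(k : ℝ) * h t)) ^ 2 = Real.exp (-2 * (k : ℝ) * h t) := by
      rw [sq_exp]; congr 1; ring
    have e02 : (Real.exp ((k : ℝ) * h t)) ^ 2 = Real.exp (2 * (k : ℝ) * h t) := by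
      rw [sq_exp]; congr 1; ring
    have e03 : (Real.exp (-(k : ℝ) * 0)) ^ 2 = 1 := by
      rw [mul_zero, Real.exp_zero, one_pow]
    have habs : ((|k| : ℤ) : ℝ) = |(k : ℝ)| := by push_cast; ring
    rw [e01, e02, e03, habs]
    nlinarith [hint]
end
end

section
/- For every ε > 0 there exists a constant C > 0, independent of N, such that for all N ∈ ℕ and all trigonometric polynomials f(α) = Σ_{k=−N}^{N} f_k e^{ikα} and g(α) = Σ_{k=−N}^{N} g_k e^{ikα}: ‖Λ^{1/2}(fg) − f Λ^{1/2} g‖_{L²(𝕋)} ≤ C ‖Λ^{1+ε} f‖_{L²(𝕋)} ‖g‖_{L²(𝕋)}. -/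
open Real MeasureTheory Set

noncomputable section

/-- The trigonometric polynomial `Σ_{k=-N}^{N} a_k e^{ikα}`. -/
def tpoly (N : ℕ) (a : ℤ → ℂ) (α : ℝ) : ℂ :=
  ∑ k ∈ Finset.Icc (-(N : ℤ)) (N : ℤ), a k * Complex.exp (Complex.I * (k : ℂ) * (α : ℂ))

/-- `Λ^s` applied to a trigonometric polynomial: `Σ_{k=-N}^{N} |k|^s a_k e^{ikα}`. -/
def tpolyLam (s : ℝ) (N : ℕ) (a : ℤ → ℂ) (α : ℝ) : ℂ :=
  ∑ k ∈ Finset.Icc (-(N : ℤ)) (N : ℤ),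
    ((((|k| : ℤ) : ℝ) ^ s : ℝ) : ℂ) * a k * Complex.exp (Complex.I * (k : ℂ) * (α : ℂ))

/-- Fourier coefficients of the product `fg` of two trigonometric polynomials of
degree `N` (discrete convolution of the coefficients). -/
def convC (N : ℕ) (a b : ℤ → ℂ) (k : ℤ) : ℂ :=
  ∑ j ∈ Finset.Icc (-(N : ℤ)) (N : ℤ), a j * b (k - j)

/-- `L²(𝕋)` norm. -/
def l2T (F : ℝ → ℂ) : ℝ := Real.sqrt (∫ α in (-π)..π, ‖F α‖ ^ 2)

/-! ### Auxiliary lemmas -/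

lemma intExp (k : ℤ) :
    ∫ α in (-π)..π, Complex.exp (Complex.I * (k : ℂ) * (α : ℂ))
      = if k = 0 then (2 * π : ℂ) else 0 := by
  rcases eq_or_ne k 0 with hk | hk
  · rw [if_pos hk]
    simp only [hk, Int.cast_zero, mul_zero, zero_mul, Complex.exp_zero]
    rw [intervalIntegral.integral_const, sub_neg_eq_add]
    simp [Complex.real_smul]
    ring
  · have hc : (Complex.I * (k : ℂ)) ≠ 0 :=
      mul_ne_zero Complex.I_ne_zero (by exact_mod_cast hk)
    have := integral_exp_mul_complex (a := -π) (b := π) hc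
    simp only [mul_assoc] at this ⊢
    rw [this, if_neg hk]
    have h1 : Complex.exp (Complex.I * ((k:ℂ) * (π:ℂ)))
        = Complex.exp (Complex.I * ((k:ℂ) * ((-π:ℝ):ℂ))) * Complex.exp ((k:ℂ) * (2 * (π:ℂ) * Complex.I)) := by
      rw [← Complex.exp_add]
      push_cast
      ring_nf
    rw [h1, Complex.exp_int_mul_two_pi_mul_I, mul_one, sub_self, zero_div]

lemma parseval (s : Finset ℤ) (c : ℤ → ℂ) :
    ∫ α in (-π)..π, ‖∑ k ∈ s, c k * Complex.exp (Complex.I * (k : ℂ) * (α : ℂ))‖ ^ 2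
      = 2 * π * ∑ k ∈ s, ‖c k‖ ^ 2 := by
  have cont : ∀ m : ℤ, Continuous fun α : ℝ => Complex.exp (Complex.I * (m : ℂ) * (α : ℂ)) := by
    intro m
    exact Complex.continuous_exp.comp (by continuity)
  have key : ∀ α : ℝ,
      ((‖∑ k ∈ s, c k * Complex.exp (Complex.I * (k : ℂ) * (α : ℂ))‖ ^ 2 : ℝ) : ℂ)
      = ∑ k ∈ s, ∑ j ∈ s,
          (c k * (starRingEnd ℂ) (c j)) * Complex.exp (Complex.I * ((k - j : ℤ) : ℂ) * (α : ℂ)) := by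
    intro α
    set F := ∑ k ∈ s, c k * Complex.exp (Complex.I * (k : ℂ) * (α : ℂ)) with hF
    have h1 : ((‖F‖ ^ 2 : ℝ) : ℂ) = F * (starRingEnd ℂ) F := by
      rw [Complex.mul_conj]
      norm_cast
      rw [Complex.normSq_eq_norm_sq]
    rw [h1, hF, map_sum, Finset.sum_mul_sum]
    refine Finset.sum_congr rfl fun k hk => Finset.sum_congr rfl fun j hj => ?_
    rw [map_mul, ← Complex.exp_conj]
    rw [mul_mul_mul_comm, ← Complex.exp_add]
    congr 1
    simp only [map_mul, Complex.conj_I, Complex.conj_ofReal, map_intCast]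
    push_cast
    ring_nf
  have intg : ∀ m : ℤ, ∀ z : ℂ, IntervalIntegrable
      (fun α : ℝ => z * Complex.exp (Complex.I * (m : ℂ) * (α : ℂ))) volume (-π) π :=
    fun m z => (continuous_const.mul (cont m)).intervalIntegrable _ _
  have h2 : ((∫ α in (-π)..π, ‖∑ k ∈ s, c k * Complex.exp (Complex.I * (k : ℂ) * (α : ℂ))‖ ^ 2 : ℝ) : ℂ)
      = ∑ k ∈ s, ∑ j ∈ s, (c k * (starRingEnd ℂ) (c j)) * (if (k - j : ℤ) = 0 then (2 * π : ℂ) else 0) := by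
    rw [← intervalIntegral.integral_ofReal]
    simp_rw [key]
    have hsum := intervalIntegral.integral_finset_sum (μ := volume) (a := -π) (b := π)
      (f := fun k α => ∑ j ∈ s, (c k * (starRingEnd ℂ) (c j)) * Complex.exp (Complex.I * ((k - j : ℤ) : ℂ) * (α : ℂ)))
      (fun k (_ : k ∈ s) => by
        simpa [Finset.sum_fn] using IntervalIntegrable.sum s (fun j _ => intg (k - j) (c k * (starRingEnd ℂ) (c j))))
    rw [hsum]
    refine Finset.sum_congr rfl fun k _ => ?_
    rw [intervalIntegral.integral_finset_sum (fun j _ => intg _ _)]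
    refine Finset.sum_congr rfl fun j _ => ?_
    rw [intervalIntegral.integral_const_mul, intExp]
  have h3 : ∑ k ∈ s, ∑ j ∈ s, (c k * (starRingEnd ℂ) (c j)) * (if (k - j : ℤ) = 0 then (2 * π : ℂ) else 0)
      = ((2 * π * ∑ k ∈ s, ‖c k‖ ^ 2 : ℝ) : ℂ) := by
    have e1 : ∀ k j : ℤ, (c k * (starRingEnd ℂ) (c j)) * (if (k - j : ℤ) = 0 then (2 * π : ℂ) else 0)
        = if j = k then (c j * (starRingEnd ℂ) (c j)) * (2 * π : ℂ) else 0 := by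
      intro k j
      rcases eq_or_ne j k with h | h
      · simp [h]
      · rw [if_neg (by omega : ¬ (k - j : ℤ) = 0), if_neg h, mul_zero]
    simp_rw [e1, Finset.sum_ite_eq' s]
    rw [Finset.sum_congr rfl (fun k hk => if_pos hk)]
    push_cast
    rw [Finset.mul_sum]
    refine Finset.sum_congr rfl fun k _ => ?_
    rw [Complex.mul_conj]
    rw [Complex.normSq_eq_norm_sq]
    norm_cast
    push_cast; ring
  rw [← Complex.ofReal_inj]
  rw [h2, h3]

lemma prod_expand (s : ℝ) (N : ℕ) (a b : ℤ → ℂ)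
    (hb : ∀ k : ℤ, k ∉ Finset.Icc (-(N:ℤ)) (N:ℤ) → b k = 0) (α : ℝ) :
    tpoly N a α * tpolyLam s N b α
      = ∑ k ∈ Finset.Icc (-(2*N:ℤ)) (2*N:ℤ),
          (∑ j ∈ Finset.Icc (-(N:ℤ)) (N:ℤ),
            a j * ((((|k - j| : ℤ) : ℝ) ^ s : ℝ) : ℂ) * b (k - j))
          * Complex.exp (Complex.I * (k : ℂ) * (α : ℂ)) := by
  unfold tpoly tpolyLam
  rw [Finset.sum_mul_sum]
  have step1 : ∀ j ∈ Finset.Icc (-(N:ℤ)) (N:ℤ),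
      ∑ m ∈ Finset.Icc (-(N:ℤ)) (N:ℤ),
        (a j * Complex.exp (Complex.I * (j:ℂ) * (α:ℂ))) *
          (((((|m| : ℤ) : ℝ) ^ s : ℝ) : ℂ) * b m * Complex.exp (Complex.I * (m:ℂ) * (α:ℂ)))
      = ∑ k ∈ Finset.Icc (-(2*N:ℤ)) (2*N:ℤ),
          a j * ((((|k - j| : ℤ) : ℝ) ^ s : ℝ) : ℂ) * b (k - j)
            * Complex.exp (Complex.I * (k:ℂ) * (α:ℂ)) := by
    intro j hj
    simp only [Finset.mem_Icc] at hj
    have e1 : ∑ m ∈ Finset.Icc (-(N:ℤ)) (N:ℤ),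
        (a j * Complex.exp (Complex.I * (j:ℂ) * (α:ℂ))) *
          (((((|m| : ℤ) : ℝ) ^ s : ℝ) : ℂ) * b m * Complex.exp (Complex.I * (m:ℂ) * (α:ℂ)))
        = ∑ k ∈ Finset.Icc (j + -(N:ℤ)) (j + (N:ℤ)),
          a j * ((((|k - j| : ℤ) : ℝ) ^ s : ℝ) : ℂ) * b (k - j)
            * Complex.exp (Complex.I * (k:ℂ) * (α:ℂ)) := by
      rw [← Finset.map_add_left_Icc, Finset.sum_map]
      refine Finset.sum_congr rfl fun m _ => ?_
      simp only [addLeftEmbedding_apply, add_sub_cancel_left]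
      rw [mul_mul_mul_comm, ← Complex.exp_add]
      have : Complex.I * (j:ℂ) * (α:ℂ) + Complex.I * (m:ℂ) * (α:ℂ)
          = Complex.I * ((j + m : ℤ):ℂ) * (α:ℂ) := by push_cast; ring
      rw [this]
      ring
    rw [e1]
    refine Finset.sum_subset ?_ ?_
    · intro k hk
      simp only [Finset.mem_Icc] at hk ⊢
      omega
    · intro k hk hk2
      simp only [Finset.mem_Icc] at hk hk2
      rw [hb (k - j) (by simp only [Finset.mem_Icc]; omega), mul_zero, zero_mul]
  rw [Finset.sum_congr rfl step1, Finset.sum_comm]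
  refine Finset.sum_congr rfl fun k _ => ?_
  rw [Finset.sum_mul]

lemma comm_expand (s : ℝ) (N : ℕ) (a b : ℤ → ℂ)
    (hb : ∀ k : ℤ, k ∉ Finset.Icc (-(N:ℤ)) (N:ℤ) → b k = 0) (α : ℝ) :
    tpolyLam s (2*N) (convC N a b) α - tpoly N a α * tpolyLam s N b α
      = ∑ k ∈ Finset.Icc (-(2*N:ℤ)) (2*N:ℤ),
          (∑ j ∈ Finset.Icc (-(N:ℤ)) (N:ℤ),
            a j * b (k - j) *
              (((((|k| : ℤ) : ℝ) ^ s - ((|k - j| : ℤ) : ℝ) ^ s : ℝ)) : ℂ))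
          * Complex.exp (Complex.I * (k : ℂ) * (α : ℂ)) := by
  rw [prod_expand s N a b hb α]
  unfold tpolyLam convC
  have hcast : ((2*N : ℕ) : ℤ) = (2*N : ℤ) := by push_cast; ring
  rw [hcast, ← Finset.sum_sub_distrib]
  refine Finset.sum_congr rfl fun k _ => ?_
  rw [← sub_mul]
  congr 1
  rw [Finset.mul_sum, ← Finset.sum_sub_distrib]
  refine Finset.sum_congr rfl fun j _ => ?_
  push_cast
  ring

lemma sqrt_add_le' {x y : ℝ} (hx : 0 ≤ x) (hy : 0 ≤ y) : √(x + y) ≤ √x + √y := by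
  rw [← Real.sqrt_sq (by positivity : (0:ℝ) ≤ √x + √y)]
  apply Real.sqrt_le_sqrt
  nlinarith [Real.sq_sqrt hx, Real.sq_sqrt hy, Real.sqrt_nonneg x, Real.sqrt_nonneg y]

lemma abs_sqrt_sub_sqrt {x y : ℝ} (hx : 0 ≤ x) (hy : 0 ≤ y) :
    |√x - √y| ≤ √|x - y| := by
  rcases le_total y x with h | h
  · rw [abs_of_nonneg (by rw [sub_nonneg]; exact Real.sqrt_le_sqrt h),
      abs_of_nonneg (by linarith)]
    have := sqrt_add_le' hy (by linarith : (0:ℝ) ≤ x - y)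
    have hxy : y + (x - y) = x := by ring
    rw [hxy] at this
    linarith
  · rw [abs_of_nonpos (by rw [sub_nonpos]; exact Real.sqrt_le_sqrt h),
      abs_of_nonpos (by linarith)]
    have := sqrt_add_le' hx (by linarith : (0:ℝ) ≤ y - x)
    have hxy : x + (y - x) = y := by ring
    rw [hxy] at this
    rw [neg_sub, neg_sub]
    linarith

lemma symbol_bound (k j : ℤ) :
    |((|k| : ℤ) : ℝ) ^ ((1:ℝ)/2) - ((|k - j| : ℤ) : ℝ) ^ ((1:ℝ)/2)|
      ≤ ((|j| : ℤ) : ℝ) ^ ((1:ℝ)/2) := by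
  have h1 : ∀ m : ℤ, ((|m| : ℤ) : ℝ) ^ ((1:ℝ)/2) = √((|m| : ℤ) : ℝ) := by
    intro m
    rw [Real.sqrt_eq_rpow]
  rw [h1, h1, h1]
  refine le_trans (abs_sqrt_sub_sqrt (by positivity) (by positivity)) ?_
  apply Real.sqrt_le_sqrt
  have : |(|k| : ℤ) - (|k - j| : ℤ)| ≤ |j| := by
    have := abs_abs_sub_abs_le_abs_sub k (k - j)
    simpa using this
  calc |((|k| : ℤ) : ℝ) - ((|k - j| : ℤ) : ℝ)| = ((|(|k| : ℤ) - (|k - j| : ℤ)| : ℤ) : ℝ) := by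
        push_cast
        ring_nf
    _ ≤ ((|j| : ℤ) : ℝ) := by exact_mod_cast this

lemma weight_sum_bound (ε : ℝ) (hε : 0 < ε) (N : ℕ) :
    ∑ j ∈ Finset.Icc (-(N:ℤ)) (N:ℤ), ((|j| : ℤ) : ℝ) ^ (-(1 + 2*ε))
      ≤ 2 * ∑' n : ℕ, (n : ℝ) ^ (-(1 + 2*ε)) := by
  set p : ℝ := -(1 + 2*ε) with hp
  have hsum : Summable (fun n : ℕ => (n : ℝ) ^ p) :=
    Real.summable_nat_rpow.mpr (by rw [hp]; linarith)
  have hnn : ∀ n : ℕ, 0 ≤ (n : ℝ) ^ p := fun n => Real.rpow_nonneg (Nat.cast_nonneg n) p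
  have piece : ∀ (s : Finset ℤ), (∀ j ∈ s, 0 ≤ j) → (∀ j ∈ s, j ≤ N) →
      ∑ j ∈ s, ((|j| : ℤ) : ℝ) ^ p ≤ ∑' n : ℕ, (n : ℝ) ^ p := by
    intro s hs hsN
    have : ∑ j ∈ s, ((|j| : ℤ) : ℝ) ^ p = ∑ n ∈ s.image Int.toNat, (n : ℝ) ^ p := by
      rw [Finset.sum_image]
      · refine Finset.sum_congr rfl fun j hj => ?_
        congr 2
        have := hs j hj
        rw [abs_of_nonneg (by exact_mod_cast this)]
        simp [Int.toNat_of_nonneg this]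
      · intro x hx y hy hxy
        have hx0 := hs x hx; have hy0 := hs y hy
        omega
    rw [this]
    exact Summable.sum_le_tsum _ (fun n _ => hnn n) hsum
  have hsplit : Finset.Icc (-(N:ℤ)) (N:ℤ) = Finset.Icc (-(N:ℤ)) (-1) ∪ Finset.Icc 0 (N:ℤ) := by
    ext j
    simp only [Finset.mem_Icc, Finset.mem_union]
    omega
  have hdisj : Disjoint (Finset.Icc (-(N:ℤ)) (-1)) (Finset.Icc 0 (N:ℤ)) := by
    rw [Finset.disjoint_left]
    intro j hj hj2
    simp only [Finset.mem_Icc] at hj hj2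
    omega
  rw [hsplit, Finset.sum_union hdisj]
  have neg_piece : ∑ j ∈ Finset.Icc (-(N:ℤ)) (-1), ((|j| : ℤ) : ℝ) ^ p
      = ∑ j ∈ Finset.Icc (1:ℤ) (N:ℤ), ((|j| : ℤ) : ℝ) ^ p := by
    refine Finset.sum_nbij' (fun j => -j) (fun j => -j) ?_ ?_ ?_ ?_ ?_ <;>
      intro j hj <;> simp only [Finset.mem_Icc] at * <;> try omega
    rw [abs_neg]
  rw [neg_piece]
  have h1 := piece (Finset.Icc (1:ℤ) (N:ℤ))
    (fun j hj => by simp only [Finset.mem_Icc] at hj; omega)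
    (fun j hj => by simp only [Finset.mem_Icc] at hj; omega)
  have h2 := piece (Finset.Icc (0:ℤ) (N:ℤ))
    (fun j hj => by simp only [Finset.mem_Icc] at hj; omega)
    (fun j hj => by simp only [Finset.mem_Icc] at hj; omega)
  linarith

lemma young_cs (N : ℕ) (u v : ℤ → ℝ) (hu : ∀ j, 0 ≤ u j)
    (hvsupp : ∀ m : ℤ, m ∉ Finset.Icc (-(N:ℤ)) (N:ℤ) → v m = 0) :
    ∑ k ∈ Finset.Icc (-(2*N:ℤ)) (2*N:ℤ),
        (∑ j ∈ Finset.Icc (-(N:ℤ)) (N:ℤ), u j * v (k - j)) ^ 2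
      ≤ (∑ j ∈ Finset.Icc (-(N:ℤ)) (N:ℤ), u j) ^ 2
        * ∑ m ∈ Finset.Icc (-(N:ℤ)) (N:ℤ), v m ^ 2 := by
  set S := Finset.Icc (-(N:ℤ)) (N:ℤ)
  set T := Finset.Icc (-(2*N:ℤ)) (2*N:ℤ)
  have shift : ∀ j ∈ S, ∑ k ∈ T, v (k - j) ^ 2 = ∑ m ∈ S, v m ^ 2 := by
    intro j hj
    simp only [S, Finset.mem_Icc] at hj
    have e1 : ∑ k ∈ T, v (k - j) ^ 2 = ∑ m ∈ Finset.Icc (-(2*N:ℤ) - j) ((2*N:ℤ) - j), v m ^ 2 := by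
      refine Finset.sum_nbij' (fun k => k - j) (fun m => m + j) ?_ ?_ ?_ ?_ ?_ <;>
        intro k hk <;> simp only [T, Finset.mem_Icc] at * <;> omega
    rw [e1]
    refine (Finset.sum_subset ?_ ?_).symm
    · intro m hm
      simp only [S, Finset.mem_Icc] at hm
      simp only [Finset.mem_Icc]
      omega
    · intro m _ hm
      rw [hvsupp m hm]
      ring
  have cs : ∀ k : ℤ, (∑ j ∈ S, u j * v (k - j)) ^ 2
      ≤ (∑ j ∈ S, u j) * ∑ j ∈ S, u j * v (k - j) ^ 2 := by
    intro k
    have h := Finset.sum_mul_sq_le_sq_mul_sq S (fun j => √(u j)) (fun j => √(u j) * v (k - j))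
    have e1 : ∑ j ∈ S, √(u j) * (√(u j) * v (k - j)) = ∑ j ∈ S, u j * v (k - j) := by
      refine Finset.sum_congr rfl fun j _ => ?_
      rw [← mul_assoc, Real.mul_self_sqrt (hu j)]
    have e2 : ∑ j ∈ S, √(u j) ^ 2 = ∑ j ∈ S, u j := by
      refine Finset.sum_congr rfl fun j _ => Real.sq_sqrt (hu j)
    have e3 : ∑ j ∈ S, (√(u j) * v (k - j)) ^ 2 = ∑ j ∈ S, u j * v (k - j) ^ 2 := by
      refine Finset.sum_congr rfl fun j _ => ?_
      rw [mul_pow, Real.sq_sqrt (hu j)]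
    rw [e1, e2, e3] at h
    exact h
  calc ∑ k ∈ T, (∑ j ∈ S, u j * v (k - j)) ^ 2
      ≤ ∑ k ∈ T, (∑ j ∈ S, u j) * ∑ j ∈ S, u j * v (k - j) ^ 2 :=
        Finset.sum_le_sum fun k _ => cs k
    _ = (∑ j ∈ S, u j) * ∑ j ∈ S, u j * ∑ k ∈ T, v (k - j) ^ 2 := by
        rw [← Finset.mul_sum, Finset.sum_comm]
        congr 1
        refine Finset.sum_congr rfl fun j _ => ?_
        rw [Finset.mul_sum]
    _ = (∑ j ∈ S, u j) * ∑ j ∈ S, u j * ∑ m ∈ S, v m ^ 2 := by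
        congr 1
        exact Finset.sum_congr rfl fun j hj => by rw [shift j hj]
    _ = (∑ j ∈ S, u j) ^ 2 * ∑ m ∈ S, v m ^ 2 := by
        rw [← Finset.sum_mul]
        ring

/-- Commutator estimate:
`‖Λ^{1/2}(fg) − f Λ^{1/2} g‖_{L²(𝕋)} ≤ C ‖Λ^{1+ε} f‖_{L²(𝕋)} ‖g‖_{L²(𝕋)}`
for trigonometric polynomials, with `C` independent of the degree `N`. -/
theorem commutator_estimate (ε : ℝ) (hε : 0 < ε) :
    ∃ C > 0, ∀ (N : ℕ) (a b : ℤ → ℂ),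
      (∀ k : ℤ, k ∉ Finset.Icc (-(N : ℤ)) (N : ℤ) → a k = 0) →
      (∀ k : ℤ, k ∉ Finset.Icc (-(N : ℤ)) (N : ℤ) → b k = 0) →
      l2T (fun α => tpolyLam (1/2) (2 * N) (convC N a b) α
          - tpoly N a α * tpolyLam (1/2) N b α)
        ≤ C * l2T (tpolyLam (1 + ε) N a) * l2T (tpoly N b) := by
  set K0 : ℝ := ∑' n : ℕ, (n : ℝ) ^ (-(1 + 2*ε)) with hK0
  have hK0nn : 0 ≤ K0 := tsum_nonneg fun n => Real.rpow_nonneg (Nat.cast_nonneg n) _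
  set Cw : ℝ := 2 * K0 + 1 with hCw
  have hCwpos : 0 < Cw := by positivity
  refine ⟨Real.sqrt (Cw / (2 * π)), Real.sqrt_pos.mpr (by positivity), ?_⟩
  intro N a b ha hb
  set S := Finset.Icc (-(N:ℤ)) (N:ℤ) with hS
  set T := Finset.Icc (-(2*N:ℤ)) (2*N:ℤ) with hT
  -- coefficient functions
  set c : ℤ → ℂ := fun k => ∑ j ∈ S, a j * b (k - j) *
      (((((|k| : ℤ) : ℝ) ^ ((1:ℝ)/2) - ((|k - j| : ℤ) : ℝ) ^ ((1:ℝ)/2) : ℝ)) : ℂ) with hc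
  set u : ℤ → ℝ := fun j => ((|j| : ℤ) : ℝ) ^ ((1:ℝ)/2) * ‖a j‖ with hu
  set v : ℤ → ℝ := fun m => ‖b m‖ with hv
  set g : ℤ → ℝ := fun j => ((|j| : ℤ) : ℝ) ^ (1 + ε) * ‖a j‖ with hg
  set w : ℤ → ℝ := fun j => ((|j| : ℤ) : ℝ) ^ (-(1/2 + ε)) with hw
  have hunn : ∀ j, 0 ≤ u j := fun j => mul_nonneg (Real.rpow_nonneg (by positivity) _) (norm_nonneg _)
  have hgnn : ∀ j, 0 ≤ g j := fun j => mul_nonneg (Real.rpow_nonneg (by positivity) _) (norm_nonneg _)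
  -- LHS rewrite
  have lhs_eq : l2T (fun α => tpolyLam (1/2) (2 * N) (convC N a b) α
      - tpoly N a α * tpolyLam (1/2) N b α)
      = Real.sqrt (2 * π * ∑ k ∈ T, ‖c k‖ ^ 2) := by
    have hfun : (fun α => tpolyLam (1/2) (2 * N) (convC N a b) α
        - tpoly N a α * tpolyLam (1/2) N b α)
        = fun α : ℝ => ∑ k ∈ T, c k * Complex.exp (Complex.I * (k : ℂ) * (α : ℂ)) := by
      funext α
      exact comm_expand (1/2) N a b hb α
    rw [hfun]
    unfold l2T
    rw [parseval T c]
  -- A and B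
  have rhsA : l2T (tpolyLam (1 + ε) N a) = Real.sqrt (2 * π * ∑ j ∈ S, g j ^ 2) := by
    unfold l2T tpolyLam
    rw [show (∫ α in (-π)..π, ‖∑ k ∈ S, ((((|k| : ℤ) : ℝ) ^ (1 + ε) : ℝ) : ℂ) * a k
          * Complex.exp (Complex.I * (k : ℂ) * (α : ℂ))‖ ^ 2)
        = 2 * π * ∑ k ∈ S, ‖((((|k| : ℤ) : ℝ) ^ (1 + ε) : ℝ) : ℂ) * a k‖ ^ 2 from parseval S _]
    congr 2
    refine Finset.sum_congr rfl fun j _ => ?_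
    rw [norm_mul, Complex.norm_real, Real.norm_eq_abs,
      abs_of_nonneg (Real.rpow_nonneg (by positivity) _)]
  have rhsB : l2T (tpoly N b) = Real.sqrt (2 * π * ∑ m ∈ S, v m ^ 2) := by
    unfold l2T tpoly
    rw [parseval S b]
  -- coefficient bound
  have cbound : ∀ k : ℤ, ‖c k‖ ≤ ∑ j ∈ S, u j * v (k - j) := by
    intro k
    refine le_trans (norm_sum_le S _) (Finset.sum_le_sum fun j _ => ?_)
    rw [norm_mul, norm_mul, Complex.norm_real, Real.norm_eq_abs]
    calc ‖a j‖ * ‖b (k - j)‖ * |((|k| : ℤ) : ℝ) ^ ((1:ℝ)/2) - ((|k - j| : ℤ) : ℝ) ^ ((1:ℝ)/2)|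
        ≤ ‖a j‖ * ‖b (k - j)‖ * ((|j| : ℤ) : ℝ) ^ ((1:ℝ)/2) := by
          refine mul_le_mul_of_nonneg_left (symbol_bound k j) (by positivity)
      _ = u j * v (k - j) := by rw [hu, hv]; ring
  have sum_sq_bound : ∑ k ∈ T, ‖c k‖ ^ 2 ≤ (∑ j ∈ S, u j) ^ 2 * ∑ m ∈ S, v m ^ 2 := by
    refine le_trans (Finset.sum_le_sum fun k _ => ?_) (young_cs N u v hunn
      (fun m hm => by rw [hv]; simp [hb m hm]))
    exact pow_le_pow_left₀ (norm_nonneg _) (cbound k) 2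
  -- ℓ¹ bound on u
  have u_eq : ∀ j : ℤ, u j = w j * g j := by
    intro j
    rcases eq_or_ne j 0 with h | h
    · rw [hu, hw, hg, h]
      simp only [abs_zero, Int.cast_zero]
      rw [Real.zero_rpow (by norm_num : (1:ℝ)/2 ≠ 0),
        Real.zero_rpow (ne_of_lt (by linarith : -(1/2+ε) < (0:ℝ))),
        Real.zero_rpow (ne_of_gt (by linarith : (0:ℝ) < 1+ε))]
      ring
    · have hpos : (0:ℝ) < ((|j| : ℤ) : ℝ) := by
        have : (0:ℤ) < |j| := abs_pos.mpr h
        exact_mod_cast this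
      simp only [hu, hw, hg]
      rw [← mul_assoc, ← Real.rpow_add hpos]
      norm_num
      left
      congr 1
      ring
  have l1 : (∑ j ∈ S, u j) ^ 2 ≤ (∑ j ∈ S, w j ^ 2) * (∑ j ∈ S, g j ^ 2) := by
    have h := Finset.sum_mul_sq_le_sq_mul_sq S w g
    have e : ∑ j ∈ S, w j * g j = ∑ j ∈ S, u j :=
      Finset.sum_congr rfl fun j _ => (u_eq j).symm
    rw [e] at h
    exact h
  have wsq : ∀ j : ℤ, w j ^ 2 = ((|j| : ℤ) : ℝ) ^ (-(1 + 2*ε)) := by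
    intro j
    have hx : (0:ℝ) ≤ ((|j| : ℤ) : ℝ) := by positivity
    rw [hw]
    have : (((|j| : ℤ) : ℝ) ^ (-(1/2 + ε))) ^ (2:ℕ)
        = (((|j| : ℤ) : ℝ) ^ (-(1/2 + ε))) ^ ((2:ℕ):ℝ) := (Real.rpow_natCast _ 2).symm
    rw [this, ← Real.rpow_mul hx]
    norm_num
    ring_nf
  have l2 : ∑ j ∈ S, w j ^ 2 ≤ 2 * K0 := by
    calc ∑ j ∈ S, w j ^ 2 = ∑ j ∈ S, ((|j| : ℤ) : ℝ) ^ (-(1 + 2*ε)) :=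
          Finset.sum_congr rfl fun j _ => wsq j
      _ ≤ 2 * K0 := weight_sum_bound ε hε N
  set A : ℝ := ∑ j ∈ S, g j ^ 2 with hA'
  set B : ℝ := ∑ m ∈ S, v m ^ 2 with hB'
  have hA : 0 ≤ A := Finset.sum_nonneg fun j _ => sq_nonneg _
  have hB : 0 ≤ B := Finset.sum_nonneg fun m _ => sq_nonneg _
  have chain : ∑ k ∈ T, ‖c k‖ ^ 2 ≤ Cw * A * B := by
    calc ∑ k ∈ T, ‖c k‖ ^ 2 ≤ (∑ j ∈ S, u j) ^ 2 * B := sum_sq_bound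
      _ ≤ ((∑ j ∈ S, w j ^ 2) * A) * B := mul_le_mul_of_nonneg_right l1 hB
      _ ≤ (Cw * A) * B := by
          refine mul_le_mul_of_nonneg_right (mul_le_mul_of_nonneg_right ?_ hA) hB
          rw [hCw]; linarith
      _ = Cw * A * B := by ring
  rw [lhs_eq, rhsA, rhsB]
  have hpi : (0:ℝ) < 2 * π := by positivity
  have e : Cw / (2 * π) * (2 * π * A) * (2 * π * B) = 2 * π * (Cw * A * B) := by
    field_simp
  calc Real.sqrt (2 * π * ∑ k ∈ T, ‖c k‖ ^ 2)
      ≤ Real.sqrt (2 * π * (Cw * A * B)) :=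
        Real.sqrt_le_sqrt (mul_le_mul_of_nonneg_left chain (le_of_lt hpi))
    _ = Real.sqrt (Cw / (2 * π) * (2 * π * A) * (2 * π * B)) := by rw [e]
    _ = Real.sqrt (Cw / (2 * π)) * Real.sqrt (2 * π * A) * Real.sqrt (2 * π * B) := by
        rw [Real.sqrt_mul (by positivity), Real.sqrt_mul (by positivity)]
end
end

section
/- Let z = (z₁, z₂) be a smooth curve with z₁(α) − α and z₂(α) 2π-periodic, satisfying the arc-chord condition, with z odd, ∂_α z₁(α) > 0 for α ∉ 2πℤ, ∂_α z₁(0) = 0 and ∂_α z₂(0) > 0. Define v₁(α) = ∫_{−π}^{π} [sin(z₁(α) − z₁(α−β)) (∂_α z₁(α) − ∂_α z₁(α−β))] / [cosh(z₂(α) − z₂(α−β)) − cos(z₁(α) − z₁(α−β))] dβ. Then v₁ is differentiable at α = 0 and (∂_α v₁)(0) = 2 ∂_α z₂(0) ∫_0^{π} sin(z₁(β)) sinh(z₂(β)) (cosh(z₂(β)) − cos(z₁(β)))^{−2} ∂_α z₁(β) dβ. -/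
open Real MeasureTheory Set

noncomputable section

/-- Distance from `β` to `2πℤ`. -/
def distTZ (β : ℝ) : ℝ := |β - 2 * π * ((round (β / (2 * π)) : ℤ) : ℝ)|

/-- `z(α) - (α, 0)` is `2π`-periodic. -/
def PerCurve (z : ℝ → ℝ × ℝ) : Prop := ∀ α, z (α + 2 * π) = z α + (2 * π, 0)

/-- The denominator `cosh(z₂(α) - z₂(α-β)) - cos(z₁(α) - z₁(α-β))`. -/
def Qden (z : ℝ → ℝ × ℝ) (α β : ℝ) : ℝ :=
  Real.cosh ((z α).2 - (z (α - β)).2) - Real.cos ((z α).1 - (z (α - β)).1)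

/-- Arc-chord condition. -/
def ArcChord (z : ℝ → ℝ × ℝ) : Prop :=
  ∃ C > 0, ∀ α β : ℝ, distTZ β ^ 2 ≤ C * (2 * Qden z α β)

/-- The horizontal component of the Muskat velocity (ρ² - ρ¹ = 4π). -/
def v1 (z : ℝ → ℝ × ℝ) (α : ℝ) : ℝ :=
  ∫ β in (-π)..π,
    Real.sin ((z α).1 - (z (α - β)).1)
      * (deriv (fun a => (z a).1) α - deriv (fun a => (z a).1) (α - β)) / Qden z α β

section Helpers

lemma distTZ_nonneg (β : ℝ) : 0 ≤ distTZ β := abs_nonneg _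

lemma distTZ_le_pi (β : ℝ) : distTZ β ≤ π := by
  have h2π : (0:ℝ) < 2 * π := by positivity
  have h : β - 2 * π * ((round (β / (2 * π)) : ℤ) : ℝ)
      = (2 * π) * (β / (2 * π) - ((round (β / (2 * π)) : ℤ) : ℝ)) := by
    field_simp
  rw [distTZ, h, abs_mul, abs_of_pos h2π]
  have := abs_sub_round (β / (2 * π))
  nlinarith [pi_pos]

lemma distTZ_eq_abs {β : ℝ} (hβ : |β| ≤ π) : distTZ β = |β| := by
  have h2π : (0:ℝ) < 2 * π := by positivity
  rcases eq_or_lt_of_le hβ with h | h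
  · rcases (abs_eq (le_of_lt pi_pos)).mp h with h1 | h1
    · subst h1
      have hr : round ((π:ℝ) / (2 * π)) = 1 := by
        have : (π:ℝ) / (2 * π) = 1 / 2 := by field_simp
        rw [this, round_eq]; norm_num
      rw [distTZ, hr]
      push_cast
      rw [abs_of_nonpos (by nlinarith [pi_pos]), abs_of_pos pi_pos]
      ring
    · subst h1
      have hr : round ((-π:ℝ) / (2 * π)) = 0 := by
        have heq : (-π:ℝ) / (2 * π) = -(1 / 2) := by field_simp
        rw [heq, round_eq]; norm_num
      rw [distTZ, hr]
      push_cast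
      simp
  · have hr : round (β / (2 * π)) = 0 := by
      rw [round_eq_zero_iff]
      constructor
      · rw [le_div_iff₀ h2π]
        nlinarith [abs_le.mp hβ |>.1]
      · rw [div_lt_iff₀ h2π]
        nlinarith [abs_le.mp hβ |>.2, (abs_lt.mp h).2]
    rw [distTZ, hr]
    push_cast
    simp

lemma distTZ_pos {β : ℝ} (h1 : |β| ≤ π) (h2 : β ≠ 0) : 0 < distTZ β := by
  rw [distTZ_eq_abs h1]
  exact abs_pos.mpr h2

lemma aux_per_bdd {g : ℝ → ℝ} (hc : Continuous g) (hp : Function.Periodic g (2 * π)) :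
    ∃ M : ℝ, 0 ≤ M ∧ ∀ x, |g x| ≤ M := by
  obtain ⟨M, hM⟩ :=
    (isCompact_Icc (a := (0:ℝ)) (b := 2 * π)).exists_bound_of_continuousOn hc.continuousOn
  refine ⟨max M 0, le_max_right _ _, fun x => ?_⟩
  obtain ⟨y, hy, hxy⟩ := hp.exists_mem_Ico₀ (by positivity) x
  rw [hxy]
  calc |g y| ≤ M := by simpa [Real.norm_eq_abs] using hM y ⟨hy.1, hy.2.le⟩
  _ ≤ max M 0 := le_max_left _ _

lemma aux_lip {g g' : ℝ → ℝ} {M : ℝ} (hg : ∀ x, HasDerivAt g (g' x) x)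
    (hM : ∀ x, |g' x| ≤ M) (x y : ℝ) : |g x - g y| ≤ M * |x - y| := by
  have := Convex.norm_image_sub_le_of_norm_hasDerivWithin_le
    (f := g) (f' := g') (s := Set.univ)
    (fun a _ => (hg a).hasDerivWithinAt)
    (fun a _ => by simpa [Real.norm_eq_abs] using hM a)
    convex_univ (Set.mem_univ y) (Set.mem_univ x)
  simpa [Real.norm_eq_abs] using this

lemma aux_lip_mod {g : ℝ → ℝ} {M : ℝ} (hper : Function.Periodic g (2 * π))
    (hlip : ∀ a b, |g a - g b| ≤ M * |a - b|) (x y : ℝ) :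
    |g x - g y| ≤ M * distTZ (x - y) := by
  set k : ℤ := round ((x - y) / (2 * π)) with hk
  have hgy : g y = g (y + (k:ℝ) * (2 * π)) := by
    have := hper.sub_int_mul_eq (x := y + (k:ℝ) * (2 * π)) k
    rw [add_sub_cancel_right] at this
    exact this
  rw [hgy]
  have h := hlip x (y + (k:ℝ) * (2 * π))
  have harg : x - (y + (k:ℝ) * (2 * π)) = (x - y) - 2 * π * (k:ℝ) := by ring
  rw [harg] at h
  exact h

lemma aux_abs_sin (x : ℝ) : |Real.sin x| ≤ |x| := by
  have := aux_lip (g := Real.sin) (g' := Real.cos) (M := 1)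
    (fun a => Real.hasDerivAt_sin a) (fun a => Real.abs_cos_le_one a) x 0
  simpa using this

lemma aux_abs_sinh {u M : ℝ} (h : |u| ≤ M) : |Real.sinh u| ≤ Real.cosh M * |u| := by
  have hM : 0 ≤ M := le_trans (abs_nonneg u) h
  have := Convex.norm_image_sub_le_of_norm_hasDerivWithin_le
    (f := Real.sinh) (f' := Real.cosh) (s := Set.Icc (-M) M)
    (fun a _ => (Real.hasDerivAt_sinh a).hasDerivWithinAt)
    (fun a ha => by
      rw [Real.norm_eq_abs, abs_of_pos (Real.cosh_pos a)]
      rw [Real.cosh_le_cosh]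
      rw [abs_of_nonneg hM]
      exact abs_le.mpr ⟨ha.1, ha.2⟩)
    (convex_Icc _ _) (Set.mem_Icc.mpr ⟨neg_nonpos.mpr hM, hM⟩)
    (Set.mem_Icc.mpr ⟨neg_le.mp (neg_le.mpr (abs_le.mp h).1), (abs_le.mp h).2⟩)
  simpa [Real.norm_eq_abs] using this

lemma aux_abs_mem_uIcc {s γ : ℝ} (hs : s ∈ Set.uIcc 0 γ) : |s| ≤ |γ| := by
  rcases le_total 0 γ with h | h
  · rw [Set.uIcc_of_le h] at hs
    rw [abs_of_nonneg hs.1, abs_of_nonneg h]; exact hs.2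
  · rw [Set.uIcc_of_ge h] at hs
    rw [abs_of_nonpos hs.2, abs_of_nonpos h]; exact neg_le_neg hs.1

lemma aux_per_deriv {g : ℝ → ℝ} (h : Function.Periodic g (2 * π)) :
    Function.Periodic (deriv g) (2 * π) := by
  intro x
  have : deriv (fun y => g (y + 2 * π)) x = deriv g (x + 2 * π) := deriv_comp_add_const _ _ _
  rw [← this]
  congr 1
  exact funext h

end Helpers

set_option maxHeartbeats 4000000 in
/-- For a smooth odd periodic curve with vertical tangent at the origin, the
derivative of the horizontal velocity at `0` is given by the explicit formula
`(∂_α v₁)(0) = 2 ∂_α z₂(0) ∫₀^π sin z₁ sinh z₂ (cosh z₂ - cos z₁)⁻² ∂_α z₁ dβ`. -/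
theorem deriv_v1_at_zero_formula (z : ℝ → ℝ × ℝ)
    (hsm : ContDiff ℝ (⊤ : ℕ∞) z) (hper : PerCurve z) (hac : ArcChord z)
    (hodd : ∀ α : ℝ, z (-α) = - z α)
    (hRT : ∀ α : ℝ, (¬ ∃ k : ℤ, α = 2 * π * k) → 0 < deriv (fun a => (z a).1) α)
    (hvert : deriv (fun a => (z a).1) 0 = 0)
    (hz2 : 0 < deriv (fun a => (z a).2) 0) :
    HasDerivAt (v1 z)
      (2 * deriv (fun a => (z a).2) 0 *
        ∫ β in (0 : ℝ)..π,
          Real.sin ((z β).1) * Real.sinh ((z β).2)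
            / (Real.cosh ((z β).2) - Real.cos ((z β).1)) ^ 2
            * deriv (fun a => (z a).1) β) 0 := by
  obtain ⟨C, hCpos, hacC⟩ := hac
  set z1 : ℝ → ℝ := fun a => (z a).1 with hz1def
  set z2 : ℝ → ℝ := fun a => (z a).2 with hz2def
  set d1 : ℝ → ℝ := deriv z1 with hd1def
  set d2 : ℝ → ℝ := deriv z2 with hd2def
  set dd1 : ℝ → ℝ := deriv d1 with hdd1def
  set dd2 : ℝ → ℝ := deriv d2 with hdd2def
  set ddd1 : ℝ → ℝ := deriv dd1 with hddd1def
  -- smoothness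
  have hz1sm : ContDiff ℝ ((⊤:ℕ∞) : WithTop ℕ∞) z1 := (contDiff_fst.comp hsm).of_le (by simp)
  have hz2sm : ContDiff ℝ ((⊤:ℕ∞) : WithTop ℕ∞) z2 := (contDiff_snd.comp hsm).of_le (by simp)
  have hd1sm : ContDiff ℝ ((⊤:ℕ∞) : WithTop ℕ∞) d1 := (contDiff_infty_iff_deriv.mp hz1sm).2
  have hd2sm : ContDiff ℝ ((⊤:ℕ∞) : WithTop ℕ∞) d2 := (contDiff_infty_iff_deriv.mp hz2sm).2
  have hdd1sm : ContDiff ℝ ((⊤:ℕ∞) : WithTop ℕ∞) dd1 := (contDiff_infty_iff_deriv.mp hd1sm).2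
  have hdd2sm : ContDiff ℝ ((⊤:ℕ∞) : WithTop ℕ∞) dd2 := (contDiff_infty_iff_deriv.mp hd2sm).2
  have hddd1sm : ContDiff ℝ ((⊤:ℕ∞) : WithTop ℕ∞) ddd1 := (contDiff_infty_iff_deriv.mp hdd1sm).2
  have hz1d : Differentiable ℝ z1 := hz1sm.differentiable (by simp)
  have hz2d : Differentiable ℝ z2 := hz2sm.differentiable (by simp)
  have hd1d : Differentiable ℝ d1 := hd1sm.differentiable (by simp)
  have hd2d : Differentiable ℝ d2 := hd2sm.differentiable (by simp)
  have hdd1d : Differentiable ℝ dd1 := hdd1sm.differentiable (by simp)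
  -- parity
  have hz1odd : ∀ a, z1 (-a) = - z1 a := by
    intro a; rw [hz1def]; simp [hodd a]
  have hz2odd : ∀ a, z2 (-a) = - z2 a := by
    intro a; rw [hz2def]; simp [hodd a]
  -- values at 0
  have hz10 : z1 0 = 0 := by
    have := hz1odd 0; rw [neg_zero] at this; linarith
  have hz20 : z2 0 = 0 := by
    have := hz2odd 0; rw [neg_zero] at this; linarith
  have hz0 : z 0 = 0 := by
    have h1 : (z 0).1 = 0 := hz10
    have h2 : (z 0).2 = 0 := hz20
    exact Prod.ext h1 h2
  have hd1even : ∀ a, d1 (-a) = d1 a := by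
    intro a
    have h1 : deriv (fun x => z1 (-x)) a = - d1 (-a) := by
      rw [deriv_comp_neg]
    have h2 : (fun x => z1 (-x)) = fun x => - z1 x := funext hz1odd
    rw [h2] at h1
    rw [deriv.fun_neg] at h1
    have : -d1 a = -d1 (-a) := h1
    linarith [this]
  have hd2even : ∀ a, d2 (-a) = d2 a := by
    intro a
    have h1 : deriv (fun x => z2 (-x)) a = - d2 (-a) := by
      rw [deriv_comp_neg]
    have h2 : (fun x => z2 (-x)) = fun x => - z2 x := funext hz2odd
    rw [h2] at h1
    rw [deriv.fun_neg] at h1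
    have : -d2 a = -d2 (-a) := h1
    linarith [this]
  have hdd1odd : ∀ a, dd1 (-a) = - dd1 a := by
    intro a
    have h1 : deriv (fun x => d1 (-x)) a = - dd1 (-a) := by
      rw [deriv_comp_neg]
    have h2 : (fun x => d1 (-x)) = d1 := funext hd1even
    rw [h2] at h1
    have h3 : dd1 a = -dd1 (-a) := h1
    linarith
  have hdd10 : dd1 0 = 0 := by
    have := hdd1odd 0
    rw [neg_zero] at this
    linarith
  -- periodicity
  have hz1per : ∀ a, z1 (a + 2 * π) = z1 a + 2 * π := by
    intro a; rw [hz1def]; simp [hper a]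
  have hz2per : Function.Periodic z2 (2 * π) := by
    intro a; rw [hz2def]; simp [hper a]
  have hd1per : Function.Periodic d1 (2 * π) := by
    intro a
    have h1 : deriv (fun y => z1 (y + 2 * π)) a = d1 (a + 2 * π) := deriv_comp_add_const _ _ _
    have h2 : (fun y => z1 (y + 2 * π)) = fun y => z1 y + 2 * π := funext hz1per
    rw [h2] at h1
    rw [← h1, hd1def, deriv_add_const]
  have hd2per : Function.Periodic d2 (2 * π) := by
    intro a
    have h1 : deriv (fun y => z2 (y + 2 * π)) a = d2 (a + 2 * π) := deriv_comp_add_const _ _ _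
    have h2 : (fun y => z2 (y + 2 * π)) = z2 := funext hz2per
    rw [h2] at h1
    exact h1.symm
  have hdd1per : Function.Periodic dd1 (2 * π) := aux_per_deriv hd1per
  have hdd2per : Function.Periodic dd2 (2 * π) := aux_per_deriv hd2per
  have hddd1per : Function.Periodic ddd1 (2 * π) := aux_per_deriv hdd1per
  -- bounds
  obtain ⟨B1, hB1n, hB1⟩ := aux_per_bdd hd1sm.continuous hd1per
  obtain ⟨B2, hB2n, hB2⟩ := aux_per_bdd hd2sm.continuous hd2per
  obtain ⟨B3, hB3n, hB3⟩ := aux_per_bdd hdd1sm.continuous hdd1per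
  obtain ⟨B4, hB4n, hB4⟩ := aux_per_bdd hdd2sm.continuous hdd2per
  obtain ⟨B5, hB5n, hB5⟩ := aux_per_bdd hddd1sm.continuous hddd1per
  -- global Lipschitz bounds
  have hlipz1 : ∀ x y, |z1 x - z1 y| ≤ B1 * |x - y| :=
    aux_lip (fun x => (hz1d x).hasDerivAt) hB1
  have hlipz2 : ∀ x y, |z2 x - z2 y| ≤ B2 * |x - y| :=
    aux_lip (fun x => (hz2d x).hasDerivAt) hB2
  have hlipd1 : ∀ x y, |d1 x - d1 y| ≤ B3 * |x - y| :=
    aux_lip (fun x => (hd1d x).hasDerivAt) hB3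
  have hlipd2 : ∀ x y, |d2 x - d2 y| ≤ B4 * |x - y| :=
    aux_lip (fun x => (hd2d x).hasDerivAt) hB4
  have hlipdd1 : ∀ x y, |dd1 x - dd1 y| ≤ B5 * |x - y| :=
    aux_lip (fun x => (hdd1d x).hasDerivAt) hB5
  -- mod-2π Lipschitz bounds
  have Hz2m : ∀ x y, |z2 x - z2 y| ≤ B2 * distTZ (x - y) := aux_lip_mod hz2per hlipz2
  have Hd1m : ∀ x y, |d1 x - d1 y| ≤ B3 * distTZ (x - y) := aux_lip_mod hd1per hlipd1
  have Hd2m : ∀ x y, |d2 x - d2 y| ≤ B4 * distTZ (x - y) := aux_lip_mod hd2per hlipd2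
  have Hdd1m : ∀ x y, |dd1 x - dd1 y| ≤ B5 * distTZ (x - y) := aux_lip_mod hdd1per hlipdd1
  have Hsin : ∀ x y, |Real.sin (z1 x - z1 y)| ≤ B1 * distTZ (x - y) := by
    intro x y
    have hper1 : Function.Periodic (fun a => z1 a - a) (2 * π) := by
      intro a; simp only; rw [hz1per a]; ring
    set k : ℤ := round ((x - y) / (2 * π)) with hk
    have hshift : z1 (y + (k:ℝ) * (2 * π)) = z1 y + (k:ℝ) * (2 * π) := by
      have h := hper1.sub_int_mul_eq (x := y + (k:ℝ) * (2 * π)) k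
      rw [add_sub_cancel_right] at h
      linarith
    have harg : z1 x - z1 y = (z1 x - z1 (y + (k:ℝ) * (2 * π))) + (k:ℝ) * (2 * π) := by
      rw [hshift]; ring
    rw [harg, Real.sin_add_int_mul_two_pi]
    calc |Real.sin (z1 x - z1 (y + (k:ℝ) * (2 * π)))|
        ≤ |z1 x - z1 (y + (k:ℝ) * (2 * π))| := aux_abs_sin _
      _ ≤ B1 * |x - (y + (k:ℝ) * (2 * π))| := hlipz1 _ _
      _ = B1 * distTZ (x - y) := by
          rw [distTZ, ← hk]
          congr 1
          congr 1
          ring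
  have Hsinh : ∀ x y, |Real.sinh (z2 x - z2 y)| ≤ (Real.cosh (B2 * π) * B2) * distTZ (x - y) := by
    intro x y
    have h1 := Hz2m x y
    have h2 : |z2 x - z2 y| ≤ B2 * π :=
      le_trans h1 (mul_le_mul_of_nonneg_left (distTZ_le_pi _) hB2n)
    calc |Real.sinh (z2 x - z2 y)| ≤ Real.cosh (B2 * π) * |z2 x - z2 y| := aux_abs_sinh h2
      _ ≤ Real.cosh (B2 * π) * (B2 * distTZ (x - y)) :=
          mul_le_mul_of_nonneg_left h1 (Real.cosh_pos _).le
      _ = (Real.cosh (B2 * π) * B2) * distTZ (x - y) := by ring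
  -- arc-chord facts
  have HQ : ∀ α β, distTZ β ^ 2 ≤ 2 * C * Qden z α β := fun α β => by
    have := hacC α β; linarith
  have HQpos : ∀ α β, distTZ β ≠ 0 → 0 < Qden z α β := by
    intro α β h
    have ht : 0 < distTZ β := lt_of_le_of_ne (distTZ_nonneg β) (Ne.symm h)
    nlinarith [HQ α β]
  -- second-order smallness near 0
  have hdd1small : ∀ s, |dd1 s| ≤ B5 * |s| := by
    intro s
    have := aux_lip (fun x => (hdd1d x).hasDerivAt) hB5 s 0
    simpa [hdd10] using this
  have hd1small : ∀ γ, |d1 γ| ≤ B5 * γ ^ 2 := by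
    intro γ
    have h0 := Convex.norm_image_sub_le_of_norm_hasDerivWithin_le
      (f := d1) (f' := dd1) (s := Set.uIcc 0 γ)
      (fun s _ => (hd1d s).hasDerivAt.hasDerivWithinAt)
      (fun s hs => by
        rw [Real.norm_eq_abs]
        calc |dd1 s| ≤ B5 * |s| := hdd1small s
          _ ≤ B5 * |γ| := mul_le_mul_of_nonneg_left (aux_abs_mem_uIcc hs) hB5n)
      (convex_uIcc _ _) Set.left_mem_uIcc Set.right_mem_uIcc
    have h2 : |d1 γ| ≤ B5 * |γ| * |γ| := by
      simpa [Real.norm_eq_abs, hvert] using h0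
    calc |d1 γ| ≤ B5 * |γ| * |γ| := h2
      _ = B5 * γ ^ 2 := by rw [mul_assoc, abs_mul_abs_self]; ring
  have hz1small : ∀ γ, |z1 γ| ≤ B5 * γ ^ 2 * |γ| := by
    intro γ
    have h0 := Convex.norm_image_sub_le_of_norm_hasDerivWithin_le
      (f := z1) (f' := d1) (s := Set.uIcc 0 γ)
      (fun s _ => (hz1d s).hasDerivAt.hasDerivWithinAt)
      (fun s hs => by
        rw [Real.norm_eq_abs]
        calc |d1 s| ≤ B5 * s ^ 2 := hd1small s
          _ ≤ B5 * γ ^ 2 := by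
              have h := aux_abs_mem_uIcc hs
              have h2 : s ^ 2 ≤ γ ^ 2 := by
                have h3 := mul_self_le_mul_self (abs_nonneg s) h
                rwa [abs_mul_abs_self, abs_mul_abs_self, ← sq, ← sq] at h3
              exact mul_le_mul_of_nonneg_left h2 hB5n)
      (convex_uIcc _ _) Set.left_mem_uIcc Set.right_mem_uIcc
    simpa [Real.norm_eq_abs, hz10] using h0
  -- integrand and derivative
  set F : ℝ → ℝ → ℝ := fun α β =>
    Real.sin (z1 α - z1 (α - β)) * (d1 α - d1 (α - β)) / Qden z α β with hFdef
  set F' : ℝ → ℝ → ℝ := fun α β =>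
    ((Real.cos (z1 α - z1 (α - β)) * (d1 α - d1 (α - β)) * (d1 α - d1 (α - β))
       + Real.sin (z1 α - z1 (α - β)) * (dd1 α - dd1 (α - β))) * Qden z α β
     - Real.sin (z1 α - z1 (α - β)) * (d1 α - d1 (α - β))
       * (Real.sinh (z2 α - z2 (α - β)) * (d2 α - d2 (α - β))
          + Real.sin (z1 α - z1 (α - β)) * (d1 α - d1 (α - β))))
    / Qden z α β ^ 2 with hF'def
  have hderivF : ∀ β, distTZ β ≠ 0 → ∀ α, HasDerivAt (fun a => F a β) (F' α β) α := by
    intro β hβ α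
    have hQne : Qden z α β ≠ 0 := (HQpos α β hβ).ne'
    have hz1c : HasDerivAt (fun a => z1 (a - β)) (d1 (α - β)) α := by
      have h := ((hz1d (α - β)).hasDerivAt).comp α ((hasDerivAt_id α).sub_const β)
      simpa [Function.comp_def] using h
    have hU : HasDerivAt (fun a => z1 a - z1 (a - β)) (d1 α - d1 (α - β)) α :=
      ((hz1d α).hasDerivAt).sub hz1c
    have hd1c : HasDerivAt (fun a => d1 (a - β)) (dd1 (α - β)) α := by
      have h := ((hd1d (α - β)).hasDerivAt).comp α ((hasDerivAt_id α).sub_const β)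
      simpa [Function.comp_def] using h
    have hDel : HasDerivAt (fun a => d1 a - d1 (a - β)) (dd1 α - dd1 (α - β)) α :=
      ((hd1d α).hasDerivAt).sub hd1c
    have hz2c : HasDerivAt (fun a => z2 (a - β)) (d2 (α - β)) α := by
      have h := ((hz2d (α - β)).hasDerivAt).comp α ((hasDerivAt_id α).sub_const β)
      simpa [Function.comp_def] using h
    have hW : HasDerivAt (fun a => z2 a - z2 (a - β)) (d2 α - d2 (α - β)) α :=
      ((hz2d α).hasDerivAt).sub hz2c
    have hN : HasDerivAt (fun a => Real.sin (z1 a - z1 (a - β)) * (d1 a - d1 (a - β)))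
        (Real.cos (z1 α - z1 (α - β)) * (d1 α - d1 (α - β)) * (d1 α - d1 (α - β))
          + Real.sin (z1 α - z1 (α - β)) * (dd1 α - dd1 (α - β))) α := hU.sin.mul hDel
    have hD : HasDerivAt (fun a => Qden z a β)
        (Real.sinh (z2 α - z2 (α - β)) * (d2 α - d2 (α - β))
          + Real.sin (z1 α - z1 (α - β)) * (d1 α - d1 (α - β))) α := by
      have h := (hW.cosh).sub (hU.cos)
      have he : Real.sinh (z2 α - z2 (α - β)) * (d2 α - d2 (α - β))
            - -Real.sin (z1 α - z1 (α - β)) * (d1 α - d1 (α - β))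
          = Real.sinh (z2 α - z2 (α - β)) * (d2 α - d2 (α - β))
            + Real.sin (z1 α - z1 (α - β)) * (d1 α - d1 (α - β)) := by ring
      rw [he] at h
      exact h
    exact hN.div hD hQne
  set K : ℝ := 2 * C * (B3 * B3 + B1 * B5)
      + 4 * C ^ 2 * (B1 * B3 * (Real.cosh (B2 * π) * B2 * B4 + B1 * B3)) with hKdef
  have key_boundF : ∀ β, distTZ β ≠ 0 → ∀ α, |F α β| ≤ 2 * C * (B1 * B3) := by
    intro β hβ α
    have ht : 0 < distTZ β := lt_of_le_of_ne (distTZ_nonneg β) (Ne.symm hβ)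
    have hQpos' : 0 < Qden z α β := HQpos α β hβ
    have hQ2 : distTZ β ^ 2 ≤ 2 * C * Qden z α β := HQ α β
    have hsub : α - (α - β) = β := by ring
    have hS : |Real.sin (z1 α - z1 (α - β))| ≤ B1 * distTZ β := by
      have h := Hsin α (α - β); rwa [hsub] at h
    have hDel : |d1 α - d1 (α - β)| ≤ B3 * distTZ β := by
      have h := Hd1m α (α - β); rwa [hsub] at h
    have hFval : F α β = Real.sin (z1 α - z1 (α - β)) * (d1 α - d1 (α - β)) / Qden z α β := rfl
    rw [hFval, abs_div, abs_of_pos hQpos', div_le_iff₀ hQpos', abs_mul]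
    have h1 : |Real.sin (z1 α - z1 (α - β))| * |d1 α - d1 (α - β)|
        ≤ (B1 * distTZ β) * (B3 * distTZ β) :=
      mul_le_mul hS hDel (abs_nonneg _) (by positivity)
    nlinarith [hQ2, hQpos', mul_le_mul_of_nonneg_left hQ2 (mul_nonneg hB1n hB3n)]
  have key_bound : ∀ β, distTZ β ≠ 0 → ∀ α, |F' α β| ≤ K := by
    intro β hβ α
    have ht : 0 < distTZ β := lt_of_le_of_ne (distTZ_nonneg β) (Ne.symm hβ)
    have hQpos' : 0 < Qden z α β := HQpos α β hβ
    have hQ2 : distTZ β ^ 2 ≤ 2 * C * Qden z α β := HQ α β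
    have hsub : α - (α - β) = β := by ring
    have hS : |Real.sin (z1 α - z1 (α - β))| ≤ B1 * distTZ β := by
      have h := Hsin α (α - β); rwa [hsub] at h
    have hDel : |d1 α - d1 (α - β)| ≤ B3 * distTZ β := by
      have h := Hd1m α (α - β); rwa [hsub] at h
    have hDelq : |dd1 α - dd1 (α - β)| ≤ B5 * distTZ β := by
      have h := Hdd1m α (α - β); rwa [hsub] at h
    have hDel2 : |d2 α - d2 (α - β)| ≤ B4 * distTZ β := by
      have h := Hd2m α (α - β); rwa [hsub] at h
    have hSh : |Real.sinh (z2 α - z2 (α - β))| ≤ Real.cosh (B2 * π) * B2 * distTZ β := by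
      have h := Hsinh α (α - β); rwa [hsub] at h
    have hF'val : F' α β =
        ((Real.cos (z1 α - z1 (α - β)) * (d1 α - d1 (α - β)) * (d1 α - d1 (α - β))
           + Real.sin (z1 α - z1 (α - β)) * (dd1 α - dd1 (α - β))) * Qden z α β
         - Real.sin (z1 α - z1 (α - β)) * (d1 α - d1 (α - β))
           * (Real.sinh (z2 α - z2 (α - β)) * (d2 α - d2 (α - β))
              + Real.sin (z1 α - z1 (α - β)) * (d1 α - d1 (α - β))))
        / Qden z α β ^ 2 := rfl
    have hN'b : |Real.cos (z1 α - z1 (α - β)) * (d1 α - d1 (α - β)) * (d1 α - d1 (α - β))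
           + Real.sin (z1 α - z1 (α - β)) * (dd1 α - dd1 (α - β))|
        ≤ (B3 * B3 + B1 * B5) * distTZ β ^ 2 := by
      calc |Real.cos (z1 α - z1 (α - β)) * (d1 α - d1 (α - β)) * (d1 α - d1 (α - β))
           + Real.sin (z1 α - z1 (α - β)) * (dd1 α - dd1 (α - β))|
          ≤ |Real.cos (z1 α - z1 (α - β)) * (d1 α - d1 (α - β)) * (d1 α - d1 (α - β))|
            + |Real.sin (z1 α - z1 (α - β)) * (dd1 α - dd1 (α - β))| := abs_add_le _ _
        _ = |Real.cos (z1 α - z1 (α - β))| * |d1 α - d1 (α - β)| * |d1 α - d1 (α - β)|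
            + |Real.sin (z1 α - z1 (α - β))| * |dd1 α - dd1 (α - β)| := by
            rw [abs_mul, abs_mul, abs_mul]
        _ ≤ 1 * (B3 * distTZ β) * (B3 * distTZ β) + (B1 * distTZ β) * (B5 * distTZ β) := by
            gcongr <;> first
              | exact Real.abs_cos_le_one _
              | exact hDel
              | exact hS
              | exact hDelq
        _ = (B3 * B3 + B1 * B5) * distTZ β ^ 2 := by ring
    have hNb : |Real.sin (z1 α - z1 (α - β)) * (d1 α - d1 (α - β))|
        ≤ (B1 * B3) * distTZ β ^ 2 := by
      rw [abs_mul]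
      calc |Real.sin (z1 α - z1 (α - β))| * |d1 α - d1 (α - β)|
          ≤ (B1 * distTZ β) * (B3 * distTZ β) :=
            mul_le_mul hS hDel (abs_nonneg _) (by positivity)
        _ = (B1 * B3) * distTZ β ^ 2 := by ring
    have hD'b : |Real.sinh (z2 α - z2 (α - β)) * (d2 α - d2 (α - β))
           + Real.sin (z1 α - z1 (α - β)) * (d1 α - d1 (α - β))|
        ≤ (Real.cosh (B2 * π) * B2 * B4 + B1 * B3) * distTZ β ^ 2 := by
      calc |Real.sinh (z2 α - z2 (α - β)) * (d2 α - d2 (α - β))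
           + Real.sin (z1 α - z1 (α - β)) * (d1 α - d1 (α - β))|
          ≤ |Real.sinh (z2 α - z2 (α - β)) * (d2 α - d2 (α - β))|
            + |Real.sin (z1 α - z1 (α - β)) * (d1 α - d1 (α - β))| := abs_add_le _ _
        _ = |Real.sinh (z2 α - z2 (α - β))| * |d2 α - d2 (α - β)|
            + |Real.sin (z1 α - z1 (α - β))| * |d1 α - d1 (α - β)| := by
            rw [abs_mul, abs_mul]
        _ ≤ (Real.cosh (B2 * π) * B2 * distTZ β) * (B4 * distTZ β)
            + (B1 * distTZ β) * (B3 * distTZ β) := by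
            gcongr <;> first
              | exact hSh
              | exact hDel2
              | exact hS
              | exact hDel
        _ = (Real.cosh (B2 * π) * B2 * B4 + B1 * B3) * distTZ β ^ 2 := by ring
    rw [hF'val, abs_div, abs_pow, abs_of_pos hQpos', div_le_iff₀ (by positivity)]
    have h1 : |(Real.cos (z1 α - z1 (α - β)) * (d1 α - d1 (α - β)) * (d1 α - d1 (α - β))
           + Real.sin (z1 α - z1 (α - β)) * (dd1 α - dd1 (α - β))) * Qden z α β
         - Real.sin (z1 α - z1 (α - β)) * (d1 α - d1 (α - β))
           * (Real.sinh (z2 α - z2 (α - β)) * (d2 α - d2 (α - β))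
              + Real.sin (z1 α - z1 (α - β)) * (d1 α - d1 (α - β)))|
        ≤ |Real.cos (z1 α - z1 (α - β)) * (d1 α - d1 (α - β)) * (d1 α - d1 (α - β))
           + Real.sin (z1 α - z1 (α - β)) * (dd1 α - dd1 (α - β))| * Qden z α β
          + |Real.sin (z1 α - z1 (α - β)) * (d1 α - d1 (α - β))|
            * |Real.sinh (z2 α - z2 (α - β)) * (d2 α - d2 (α - β))
              + Real.sin (z1 α - z1 (α - β)) * (d1 α - d1 (α - β))| := by
      have h0 := abs_add_le
        ((Real.cos (z1 α - z1 (α - β)) * (d1 α - d1 (α - β)) * (d1 α - d1 (α - β))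
           + Real.sin (z1 α - z1 (α - β)) * (dd1 α - dd1 (α - β))) * Qden z α β)
        (-(Real.sin (z1 α - z1 (α - β)) * (d1 α - d1 (α - β))
           * (Real.sinh (z2 α - z2 (α - β)) * (d2 α - d2 (α - β))
              + Real.sin (z1 α - z1 (α - β)) * (d1 α - d1 (α - β)))))
      rw [← sub_eq_add_neg, abs_neg, abs_mul, abs_mul] at h0
      rw [abs_of_pos hQpos'] at h0
      exact h0
    have c1 : (0:ℝ) ≤ B3 * B3 + B1 * B5 := by positivity
    have c2 : (0:ℝ) ≤ B1 * B3 := by positivity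
    have c3 : (0:ℝ) ≤ Real.cosh (B2 * π) * B2 * B4 + B1 * B3 := by positivity
    have e1 : |Real.cos (z1 α - z1 (α - β)) * (d1 α - d1 (α - β)) * (d1 α - d1 (α - β))
           + Real.sin (z1 α - z1 (α - β)) * (dd1 α - dd1 (α - β))| * Qden z α β
        ≤ ((B3 * B3 + B1 * B5) * (2 * C * Qden z α β)) * Qden z α β :=
      mul_le_mul_of_nonneg_right
        (le_trans hN'b (mul_le_mul_of_nonneg_left hQ2 c1)) hQpos'.le
    have e2 : |Real.sin (z1 α - z1 (α - β)) * (d1 α - d1 (α - β))|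
            * |Real.sinh (z2 α - z2 (α - β)) * (d2 α - d2 (α - β))
              + Real.sin (z1 α - z1 (α - β)) * (d1 α - d1 (α - β))|
        ≤ ((B1 * B3) * (2 * C * Qden z α β))
            * ((Real.cosh (B2 * π) * B2 * B4 + B1 * B3) * (2 * C * Qden z α β)) := by
      apply mul_le_mul
      · exact le_trans hNb (mul_le_mul_of_nonneg_left hQ2 c2)
      · exact le_trans hD'b (mul_le_mul_of_nonneg_left hQ2 c3)
      · exact abs_nonneg _
      · positivity
    calc _ ≤ _ := h1
      _ ≤ ((B3 * B3 + B1 * B5) * (2 * C * Qden z α β)) * Qden z α β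
          + ((B1 * B3) * (2 * C * Qden z α β))
            * ((Real.cosh (B2 * π) * B2 * B4 + B1 * B3) * (2 * C * Qden z α β)) :=
        add_le_add e1 e2
      _ = K * Qden z α β ^ 2 := by rw [hKdef]; ring
  have hz1c : Continuous z1 := hz1sm.continuous
  have hz2c : Continuous z2 := hz2sm.continuous
  have hd1c : Continuous d1 := hd1sm.continuous
  have hd2c : Continuous d2 := hd2sm.continuous
  have hdd1c : Continuous dd1 := hdd1sm.continuous
  have hQcont : ∀ x : ℝ, Continuous (fun β => Qden z x β) := by
    intro x
    have h1 : Continuous (fun β : ℝ => x - β) := continuous_const.sub continuous_id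
    exact (Real.continuous_cosh.comp (continuous_const.sub (hz2c.comp h1))).sub
      (Real.continuous_cos.comp (continuous_const.sub (hz1c.comp h1)))
  have hmeasF : ∀ x : ℝ, AEStronglyMeasurable (F x) (volume.restrict (Set.uIoc (-π) π)) := by
    intro x
    have h1 : Continuous (fun β : ℝ => x - β) := continuous_const.sub continuous_id
    have hnum : Continuous (fun β => Real.sin (z1 x - z1 (x - β)) * (d1 x - d1 (x - β))) :=
      (Real.continuous_sin.comp (continuous_const.sub (hz1c.comp h1))).mul
        (continuous_const.sub (hd1c.comp h1))
    have hFm : Measurable (F x) := by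
      have hh : F x = fun β => (Real.sin (z1 x - z1 (x - β)) * (d1 x - d1 (x - β)))
          * (Qden z x β)⁻¹ := by
        simp only [hFdef]; funext β; rw [div_eq_mul_inv]
      rw [hh]
      exact hnum.measurable.mul (hQcont x).measurable.inv
    exact hFm.aestronglyMeasurable
  have hmeasF' : AEStronglyMeasurable (F' 0) (volume.restrict (Set.uIoc (-π) π)) := by
    have h1 : Continuous (fun β : ℝ => (0:ℝ) - β) := continuous_const.sub continuous_id
    have cu : Continuous (fun β => z1 0 - z1 (0 - β)) :=
      continuous_const.sub (hz1c.comp h1)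
    have cD : Continuous (fun β => d1 0 - d1 (0 - β)) :=
      continuous_const.sub (hd1c.comp h1)
    have cDq : Continuous (fun β => dd1 0 - dd1 (0 - β)) :=
      continuous_const.sub (hdd1c.comp h1)
    have cw : Continuous (fun β => z2 0 - z2 (0 - β)) :=
      continuous_const.sub (hz2c.comp h1)
    have cD2 : Continuous (fun β => d2 0 - d2 (0 - β)) :=
      continuous_const.sub (hd2c.comp h1)
    have hnum : Continuous (fun β =>
        (Real.cos (z1 0 - z1 (0 - β)) * (d1 0 - d1 (0 - β)) * (d1 0 - d1 (0 - β))
           + Real.sin (z1 0 - z1 (0 - β)) * (dd1 0 - dd1 (0 - β))) * Qden z 0 β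
         - Real.sin (z1 0 - z1 (0 - β)) * (d1 0 - d1 (0 - β))
           * (Real.sinh (z2 0 - z2 (0 - β)) * (d2 0 - d2 (0 - β))
              + Real.sin (z1 0 - z1 (0 - β)) * (d1 0 - d1 (0 - β)))) := by
      exact ((((Real.continuous_cos.comp cu).mul cD).mul cD).add
          ((Real.continuous_sin.comp cu).mul cDq)).mul (hQcont 0) |>.sub
        ((((Real.continuous_sin.comp cu).mul cD)).mul
          (((Real.continuous_sinh.comp cw).mul cD2).add
            ((Real.continuous_sin.comp cu).mul cD)))
    have hFm : Measurable (F' 0) := by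
      have hh : F' 0 = fun β =>
          ((Real.cos (z1 0 - z1 (0 - β)) * (d1 0 - d1 (0 - β)) * (d1 0 - d1 (0 - β))
             + Real.sin (z1 0 - z1 (0 - β)) * (dd1 0 - dd1 (0 - β))) * Qden z 0 β
           - Real.sin (z1 0 - z1 (0 - β)) * (d1 0 - d1 (0 - β))
             * (Real.sinh (z2 0 - z2 (0 - β)) * (d2 0 - d2 (0 - β))
                + Real.sin (z1 0 - z1 (0 - β)) * (d1 0 - d1 (0 - β))))
          * ((Qden z 0 β ^ 2)⁻¹) := by
        simp only [hF'def]; funext β; rw [div_eq_mul_inv]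
      rw [hh]
      exact hnum.measurable.mul ((hQcont 0).pow 2).measurable.inv
    exact hFm.aestronglyMeasurable
  have hae0 : ∀ᵐ β : ℝ, β ≠ 0 := by
    refine ae_iff.mpr ?_
    have h : {a : ℝ | ¬ a ≠ 0} = {0} := by ext a; simp
    rw [h]
    exact measure_singleton 0
  have haeI : ∀ β : ℝ, β ∈ Set.uIoc (-π) π → |β| ≤ π := by
    intro β hβ
    rw [Set.uIoc_of_le (by nlinarith [pi_pos] : -π ≤ π)] at hβ
    exact abs_le.mpr ⟨hβ.1.le, hβ.2⟩
  have hFint : IntervalIntegrable (F 0) volume (-π) π := by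
    refine IntervalIntegrable.mono_fun
      (intervalIntegrable_const (c := 2 * C * (B1 * B3))) (hmeasF 0) ?_
    filter_upwards [ae_restrict_mem measurableSet_uIoc,
      (hae0.filter_mono (ae_mono Measure.restrict_le_self))] with β hβI hβ0
    rw [Real.norm_eq_abs, Real.norm_eq_abs]
    have hne : distTZ β ≠ 0 := (distTZ_pos (haeI β hβI) hβ0).ne'
    exact le_trans (key_boundF β hne 0) (le_abs_self _)
  have h_bound : ∀ᵐ β : ℝ, β ∈ Set.uIoc (-π) π → ∀ x ∈ Metric.ball (0:ℝ) 1, ‖F' x β‖ ≤ K := by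
    filter_upwards [hae0] with β hβ0 hβI x _
    have hne : distTZ β ≠ 0 := (distTZ_pos (haeI β hβI) hβ0).ne'
    simpa [Real.norm_eq_abs] using key_bound β hne x
  have h_diff : ∀ᵐ β : ℝ, β ∈ Set.uIoc (-π) π →
      ∀ x ∈ Metric.ball (0:ℝ) 1, HasDerivAt (fun a => F a β) (F' x β) x := by
    filter_upwards [hae0] with β hβ0 hβI x _
    have hne : distTZ β ≠ 0 := (distTZ_pos (haeI β hβI) hβ0).ne'
    exact hderivF β hne x
  obtain ⟨Hint, Hder⟩ := intervalIntegral.hasDerivAt_integral_of_dominated_loc_of_deriv_le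
    (F := F) (F' := F') (x₀ := (0:ℝ)) (a := -π) (b := π) (bound := fun _ => K)
    (μ := volume) (Metric.ball_mem_nhds 0 one_pos)
    (Filter.Eventually.of_forall fun x => hmeasF x) hFint hmeasF'
    h_bound intervalIntegrable_const h_diff
  -- final computation of the integral
  set T : ℝ → ℝ := fun β => d2 0 *
    (Real.sin ((z β).1) * Real.sinh ((z β).2)
      / (Real.cosh ((z β).2) - Real.cos ((z β).1)) ^ 2 * d1 β) with hTdef
  have hTz : ∀ b, T b = d2 0 *
      (Real.sin (z1 b) * Real.sinh (z2 b)
        / (Real.cosh (z2 b) - Real.cos (z1 b)) ^ 2 * d1 b) := fun b => rfl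
  set f0 : ℝ → ℝ := fun γ =>
    Real.sin (z1 γ) * d1 γ / (Real.cosh (z2 γ) - Real.cos (z1 γ)) with hf0def
  set R : ℝ → ℝ := fun β => F' 0 β - T β with hRdef
  have hQ0 : ∀ β, Qden z 0 β = Real.cosh (z2 β) - Real.cos (z1 β) := by
    intro β
    show Real.cosh ((z 0).2 - (z (0 - β)).2) - Real.cos ((z 0).1 - (z (0 - β)).1) = _
    rw [zero_sub, hodd β, hz0]
    simp [hz2def, hz1def]
  have hQself : ∀ β, Qden z β β = Real.cosh (z2 β) - Real.cos (z1 β) := by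
    intro β
    show Real.cosh ((z β).2 - (z (β - β)).2) - Real.cos ((z β).1 - (z (β - β)).1) = _
    rw [sub_self, hz0]
    simp [hz2def, hz1def]
  have hTmeas : AEStronglyMeasurable T (volume.restrict (Set.uIoc (-π) π)) := by
    have hnum : Continuous (fun β => Real.sin ((z β).1) * Real.sinh ((z β).2)) :=
      (Real.continuous_sin.comp hz1c).mul (Real.continuous_sinh.comp hz2c)
    have hden : Continuous (fun β => (Real.cosh ((z β).2) - Real.cos ((z β).1)) ^ 2) :=
      ((Real.continuous_cosh.comp hz2c).sub (Real.continuous_cos.comp hz1c)).pow 2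
    have hTm : Measurable T := by
      have hh : T = fun β => d2 0 * (Real.sin ((z β).1) * Real.sinh ((z β).2)
          * ((Real.cosh ((z β).2) - Real.cos ((z β).1)) ^ 2)⁻¹ * d1 β) := by
        simp only [hTdef]; funext β; rw [div_eq_mul_inv]
      rw [hh]
      exact measurable_const.mul ((hnum.measurable.mul hden.measurable.inv).mul hd1c.measurable)
    exact hTm.aestronglyMeasurable
  have hTbound : ∀ β, |β| ≤ π → β ≠ 0 →
      |T β| ≤ |d2 0| * (4 * C ^ 2 * (B1 * (Real.cosh (B2 * π) * B2) * B5)) := by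
    intro β hβπ hβ0
    have hne : distTZ β ≠ 0 := (distTZ_pos hβπ hβ0).ne'
    have hD0pos : 0 < Real.cosh (z2 β) - Real.cos (z1 β) := by
      rw [← hQself β]; exact HQpos β β hne
    have hq : β ^ 2 ≤ 2 * C * (Real.cosh (z2 β) - Real.cos (z1 β)) := by
      have h := HQ β β
      rwa [hQself, distTZ_eq_abs hβπ, sq_abs] at h
    have hsb : |Real.sin (z1 β)| ≤ B1 * |β| := by
      have h := Hsin β 0
      rwa [hz10, sub_zero, sub_zero, distTZ_eq_abs hβπ] at h
    have hshb : |Real.sinh (z2 β)| ≤ Real.cosh (B2 * π) * B2 * |β| := by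
      have h := Hsinh β 0
      rwa [hz20, sub_zero, sub_zero, distTZ_eq_abs hβπ] at h
    have hpb : |d1 β| ≤ B5 * β ^ 2 := hd1small β
    rw [hTz, abs_mul]
    apply mul_le_mul_of_nonneg_left _ (abs_nonneg (d2 0))
    have heq : |Real.sin (z1 β) * Real.sinh (z2 β)
        / (Real.cosh (z2 β) - Real.cos (z1 β)) ^ 2 * d1 β|
        = |Real.sin (z1 β)| * |Real.sinh (z2 β)| * |d1 β|
          / (Real.cosh (z2 β) - Real.cos (z1 β)) ^ 2 := by
      rw [abs_mul, abs_div, abs_mul, abs_pow, abs_of_pos hD0pos]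
      ring
    rw [heq, div_le_iff₀ (by positivity)]
    have h1 : |Real.sin (z1 β)| * |Real.sinh (z2 β)| * |d1 β|
        ≤ (B1 * |β|) * (Real.cosh (B2 * π) * B2 * |β|) * (B5 * β ^ 2) := by
      gcongr <;> first | exact hsb | exact hshb | exact hpb
    have h2 : (B1 * |β|) * (Real.cosh (B2 * π) * B2 * |β|) * (B5 * β ^ 2)
        = (B1 * (Real.cosh (B2 * π) * B2) * B5) * (β ^ 2 * β ^ 2) := by
      have hb : |β| * |β| = β ^ 2 := by rw [abs_mul_abs_self, sq]
      rw [← hb]; ring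
    have h3 : β ^ 2 * β ^ 2
        ≤ (2 * C * (Real.cosh (z2 β) - Real.cos (z1 β)))
          * (2 * C * (Real.cosh (z2 β) - Real.cos (z1 β))) :=
      mul_le_mul hq hq (sq_nonneg β) (by positivity)
    have hc : (0:ℝ) ≤ B1 * (Real.cosh (B2 * π) * B2) * B5 := by positivity
    calc |Real.sin (z1 β)| * |Real.sinh (z2 β)| * |d1 β|
        ≤ (B1 * (Real.cosh (B2 * π) * B2) * B5) * (β ^ 2 * β ^ 2) := by
          rw [← h2]; exact h1
      _ ≤ (B1 * (Real.cosh (B2 * π) * B2) * B5)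
          * ((2 * C * (Real.cosh (z2 β) - Real.cos (z1 β)))
            * (2 * C * (Real.cosh (z2 β) - Real.cos (z1 β)))) :=
          mul_le_mul_of_nonneg_left h3 hc
      _ = 4 * C ^ 2 * (B1 * (Real.cosh (B2 * π) * B2) * B5)
          * (Real.cosh (z2 β) - Real.cos (z1 β)) ^ 2 := by ring
  have hTint : IntervalIntegrable T volume (-π) π := by
    refine IntervalIntegrable.mono_fun
      (intervalIntegrable_const
        (c := |d2 0| * (4 * C ^ 2 * (B1 * (Real.cosh (B2 * π) * B2) * B5)))) hTmeas ?_
    filter_upwards [ae_restrict_mem measurableSet_uIoc,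
      (hae0.filter_mono (ae_mono Measure.restrict_le_self))] with β hβI hβ0
    rw [Real.norm_eq_abs, Real.norm_eq_abs]
    exact le_trans (hTbound β (haeI β hβI) hβ0) (le_abs_self _)
  have hRint : IntervalIntegrable R volume (-π) π := Hint.sub hTint
  have hf0deriv : ∀ β ∈ Set.uIcc (-π) π, HasDerivAt f0 (R β) β := by
    intro β hβ
    have hβabs : |β| ≤ π := by
      rw [Set.uIcc_of_le (by nlinarith [pi_pos] : -π ≤ π)] at hβ
      exact abs_le.mpr ⟨hβ.1, hβ.2⟩
    rcases eq_or_ne β 0 with rfl | hβ0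
    · -- the point β = 0
      have hq00 : Qden z 0 0 = 0 := by
        rw [hQ0 0, hz10, hz20]
        simp
      have hF00 : F' 0 0 = 0 := by
        have hval : F' 0 0 =
            ((Real.cos (z1 0 - z1 (0 - 0)) * (d1 0 - d1 (0 - 0)) * (d1 0 - d1 (0 - 0))
               + Real.sin (z1 0 - z1 (0 - 0)) * (dd1 0 - dd1 (0 - 0))) * Qden z 0 0
             - Real.sin (z1 0 - z1 (0 - 0)) * (d1 0 - d1 (0 - 0))
               * (Real.sinh (z2 0 - z2 (0 - 0)) * (d2 0 - d2 (0 - 0))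
                  + Real.sin (z1 0 - z1 (0 - 0)) * (d1 0 - d1 (0 - 0))))
            / Qden z 0 0 ^ 2 := rfl
        rw [hval, hq00]
        norm_num
      have hT0 : T 0 = 0 := by
        rw [hTz, hz10]
        simp
      have hR0 : R 0 = 0 := by
        have : R 0 = F' 0 0 - T 0 := rfl
        rw [this, hF00, hT0, sub_zero]
      rw [hR0]
      have hf00 : f0 0 = 0 := by
        have : f0 0 = Real.sin (z1 0) * d1 0 / (Real.cosh (z2 0) - Real.cos (z1 0)) := rfl
        rw [this, hz10]
        simp
      rw [hasDerivAt_iff_tendsto_slope]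
      apply squeeze_zero_norm' (a := fun γ : ℝ => 2 * C * (B5 * B5) * γ ^ 2)
      · have hev : ∀ᶠ γ in nhdsWithin (0:ℝ) {(0:ℝ)}ᶜ, |γ| ≤ π ∧ γ ≠ 0 := by
          have h1 : ∀ᶠ γ in nhds (0:ℝ), |γ| ≤ π := by
            filter_upwards [Metric.ball_mem_nhds (0:ℝ) pi_pos] with γ hγ
            rw [Metric.mem_ball, Real.dist_eq, sub_zero] at hγ
            exact hγ.le
          exact (h1.filter_mono nhdsWithin_le_nhds).and self_mem_nhdsWithin
        filter_upwards [hev] with γ hγp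
        obtain ⟨hγπ, hγ0⟩ := hγp
        have hslope : slope f0 0 γ = f0 γ / γ := by
          rw [slope_def_field, hf00, sub_zero, sub_zero]
        rw [hslope, Real.norm_eq_abs, abs_div]
        have ht : (0:ℝ) < |γ| := abs_pos.mpr hγ0
        have hne : distTZ γ ≠ 0 := (distTZ_pos hγπ hγ0).ne'
        have hD0pos : 0 < Real.cosh (z2 γ) - Real.cos (z1 γ) := by
          rw [← hQself γ]; exact HQpos γ γ hne
        have hq : γ ^ 2 ≤ 2 * C * (Real.cosh (z2 γ) - Real.cos (z1 γ)) := by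
          have h := HQ γ γ
          rwa [hQself, distTZ_eq_abs hγπ, sq_abs] at h
        have hfb : |f0 γ| ≤ 2 * C * (B5 * B5) * γ ^ 2 * |γ| := by
          have hval : f0 γ = Real.sin (z1 γ) * d1 γ
              / (Real.cosh (z2 γ) - Real.cos (z1 γ)) := rfl
          rw [hval, abs_div, abs_mul, abs_of_pos hD0pos, div_le_iff₀ hD0pos]
          have hsin : |Real.sin (z1 γ)| ≤ B5 * γ ^ 2 * |γ| :=
            le_trans (aux_abs_sin (z1 γ)) (hz1small γ)
          have hp := hd1small γ
          have h1 : |Real.sin (z1 γ)| * |d1 γ| ≤ (B5 * γ ^ 2 * |γ|) * (B5 * γ ^ 2) :=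
            mul_le_mul hsin hp (abs_nonneg _) (by positivity)
          have hc : (0:ℝ) ≤ B5 * B5 * (γ ^ 2 * |γ|) := by positivity
          have h2 : (B5 * B5 * (γ ^ 2 * |γ|)) * γ ^ 2
              ≤ (B5 * B5 * (γ ^ 2 * |γ|)) * (2 * C * (Real.cosh (z2 γ) - Real.cos (z1 γ))) :=
            mul_le_mul_of_nonneg_left hq hc
          nlinarith [h1, h2]
        rw [div_le_iff₀ ht]
        exact hfb
      · have hcont : Continuous (fun γ : ℝ => 2 * C * (B5 * B5) * γ ^ 2) := by
          continuity
        have h0 := hcont.tendsto 0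
        have hval : 2 * C * (B5 * B5) * (0:ℝ) ^ 2 = 0 := by ring
        rw [hval] at h0
        exact h0.mono_left nhdsWithin_le_nhds
    · -- β ≠ 0
      have hne : distTZ β ≠ 0 := (distTZ_pos hβabs hβ0).ne'
      have hD0pos : 0 < Real.cosh (z2 β) - Real.cos (z1 β) := by
        rw [← hQself β]; exact HQpos β β hne
      have hn : HasDerivAt (fun γ => Real.sin (z1 γ) * d1 γ)
          (Real.cos (z1 β) * d1 β * d1 β + Real.sin (z1 β) * dd1 β) β :=
        (((hz1d β).hasDerivAt).sin).mul ((hd1d β).hasDerivAt)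
      have hd : HasDerivAt (fun γ => Real.cosh (z2 γ) - Real.cos (z1 γ))
          (Real.sinh (z2 β) * d2 β + Real.sin (z1 β) * d1 β) β := by
        have h := (((hz2d β).hasDerivAt).cosh).sub (((hz1d β).hasDerivAt).cos)
        have he : Real.sinh (z2 β) * d2 β - -Real.sin (z1 β) * d1 β
            = Real.sinh (z2 β) * d2 β + Real.sin (z1 β) * d1 β := by ring
        rw [he] at h
        exact h
      have hq := hn.div hd hD0pos.ne'
      convert (show HasDerivAt f0 _ β from hq) using 1
      have h0 : F' 0 β =
          ((Real.cos (z1 0 - z1 (0 - β)) * (d1 0 - d1 (0 - β)) * (d1 0 - d1 (0 - β))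
             + Real.sin (z1 0 - z1 (0 - β)) * (dd1 0 - dd1 (0 - β))) * Qden z 0 β
           - Real.sin (z1 0 - z1 (0 - β)) * (d1 0 - d1 (0 - β))
             * (Real.sinh (z2 0 - z2 (0 - β)) * (d2 0 - d2 (0 - β))
                + Real.sin (z1 0 - z1 (0 - β)) * (d1 0 - d1 (0 - β))))
          / Qden z 0 β ^ 2 := rfl
      have hRval : R β = F' 0 β - T β := rfl
      rw [hRval, hTz, h0, hQ0]
      simp only [zero_sub, hz1odd, hz2odd, hd1even, hd2even, hdd1odd, hz10, hz20, hvert,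
        hdd10, neg_neg, sub_neg_eq_add, zero_add]
      have hD0ne : Real.cosh (z2 β) - Real.cos (z1 β) ≠ 0 := hD0pos.ne'
      field_simp
      ring
  have hz1pi : z1 π = π := by
    have h1 := hz1per (-π)
    have h2 := hz1odd π
    rw [show (-π) + 2 * π = π by ring] at h1
    rw [h2] at h1
    linarith
  have hintR : ∫ β in (-π)..π, R β = 0 := by
    rw [intervalIntegral.integral_eq_sub_of_hasDerivAt hf0deriv hRint]
    have h1 : f0 π = 0 := by
      rw [hf0def]
      simp only [hz1pi, Real.sin_pi]
      simp
    have h2 : f0 (-π) = 0 := by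
      rw [hf0def]
      simp only [hz1odd π, hz1pi]
      simp
    rw [h1, h2, sub_zero]
  have hTeven : ∀ β, T (-β) = T β := by
    intro β
    rw [hTz, hTz, hz1odd, hz2odd, hd1even, Real.sin_neg, Real.sinh_neg, Real.cosh_neg,
      Real.cos_neg]
    ring
  have hsplit : (∫ β in (-π)..π, F' 0 β) = 2 * d2 0 *
      ∫ β in (0:ℝ)..π,
        Real.sin ((z β).1) * Real.sinh ((z β).2)
          / (Real.cosh ((z β).2) - Real.cos ((z β).1)) ^ 2 * d1 β := by
    have hTadd : ∀ b, F' 0 b = T b + R b := fun b => by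
      have : R b = F' 0 b - T b := rfl
      rw [this]; ring
    rw [intervalIntegral.integral_congr (g := fun b => T b + R b) (fun b _ => hTadd b)]
    rw [intervalIntegral.integral_add hTint hRint, hintR, add_zero]
    have hmem0 : (0:ℝ) ∈ Set.uIcc (-π) π := by
      rw [Set.uIcc_of_le (by nlinarith [pi_pos] : -π ≤ π)]
      exact ⟨by nlinarith [pi_pos], pi_pos.le⟩
    have h1 : IntervalIntegrable T volume (-π) 0 :=
      hTint.mono_set (Set.uIcc_subset_uIcc Set.left_mem_uIcc hmem0)
    have h2 : IntervalIntegrable T volume 0 π :=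
      hTint.mono_set (Set.uIcc_subset_uIcc hmem0 Set.right_mem_uIcc)
    rw [← intervalIntegral.integral_add_adjacent_intervals h1 h2]
    have hneg : (∫ b in (-π)..(0:ℝ), T b) = ∫ b in (0:ℝ)..π, T b := by
      have hcn := intervalIntegral.integral_comp_neg (a := (0:ℝ)) (b := π) (f := T)
      rw [neg_zero] at hcn
      rw [← hcn]
      exact intervalIntegral.integral_congr (fun x _ => hTeven x)
    rw [hneg]
    have hconst : (∫ b in (0:ℝ)..π, T b) = d2 0 *
        ∫ β in (0:ℝ)..π,
          Real.sin ((z β).1) * Real.sinh ((z β).2)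
            / (Real.cosh ((z β).2) - Real.cos ((z β).1)) ^ 2 * d1 β := by
      have hh : (∫ b in (0:ℝ)..π, T b) = ∫ b in (0:ℝ)..π, d2 0 *
          (Real.sin ((z b).1) * Real.sinh ((z b).2)
            / (Real.cosh ((z b).2) - Real.cos ((z b).1)) ^ 2 * d1 b) := rfl
      rw [hh, intervalIntegral.integral_const_mul]
    rw [hconst]
    ring
  have hveq : v1 z = fun α => ∫ β in (-π)..π, F α β := rfl
  rw [hveq, ← hsplit]
  exact Hder
end
end

section
/- Let β₁ ∈ (0, π) and let z* : [−π, π] → ℝ be a C¹ odd function with (∂_β z*)(0) > 0 and z*(β) > 0 for all β ∈ (0, β₁]. Set z₁(β) = β − sin β. Then ∫_0^{β₁} sin(z₁(β)) · sinh(b z*(β)) · (cosh(b z*(β)) − cos(z₁(β)))^{−2} · (1 − cos β) dβ → 0 as b → ∞. -/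
open Real MeasureTheory Set Filter Topology

noncomputable section

private lemma cosh_lower (x : ℝ) (hx : 0 ≤ x) : 1 + x ^ 2 / 2 ≤ Real.cosh x := by
  have hid : Real.cosh x = 2 * Real.sinh (x / 2) ^ 2 + 1 := by
    have h := Real.cosh_two_mul (x / 2)
    rw [show 2 * (x / 2) = x by ring] at h
    rw [h, Real.cosh_sq]; ring
  have hs : x / 2 ≤ Real.sinh (x / 2) := Real.self_le_sinh_iff.2 (by linarith)
  nlinarith [hs]

private lemma sinh_mul_le (x : ℝ) (hx : 0 ≤ x) :
    x * Real.sinh x ≤ (x + 2) * (Real.cosh x - 1) := by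
  rw [Real.sinh_eq, Real.cosh_eq, Real.exp_neg]
  set a := Real.exp x with ha
  have ha0 : 0 < a := Real.exp_pos x
  have hae : 1 + x ≤ a := by linarith [Real.add_one_le_exp x]
  have poly : x * (a ^ 2 - 1) ≤ (x + 2) * (a - 1) ^ 2 := by
    nlinarith [mul_nonneg (by linarith : (0:ℝ) ≤ a - 1) (by linarith : (0:ℝ) ≤ a - 1 - x)]
  have e1 : x * ((a - a⁻¹) / 2) = x * (a ^ 2 - 1) / (2 * a) := by
    field_simp
  have e2 : (x + 2) * ((a + a⁻¹) / 2 - 1) = (x + 2) * (a - 1) ^ 2 / (2 * a) := by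
    field_simp; ring
  rw [e1, e2]
  gcongr

private lemma sinh_div_le (x : ℝ) (hx : 0 < x) :
    Real.sinh x / (Real.cosh x - 1) ^ 2 ≤ 2 / x ^ 2 + 4 / x ^ 3 := by
  have h2 : x ^ 2 / 2 ≤ Real.cosh x - 1 := by linarith [cosh_lower x hx.le]
  have hD0 : 0 < Real.cosh x - 1 := by nlinarith
  have h1 := sinh_mul_le x hx.le
  have key : Real.sinh x / (Real.cosh x - 1) ^ 2 ≤ (2 * x + 4) / x ^ 3 := by
    rw [div_le_div_iff₀ (by positivity) (by positivity)]
    have s1 : x ^ 2 * (x * Real.sinh x) ≤ x ^ 2 * ((x + 2) * (Real.cosh x - 1)) :=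
      mul_le_mul_of_nonneg_left h1 (sq_nonneg x)
    have s2 : x ^ 2 * ((x + 2) * (Real.cosh x - 1)) ≤
        2 * (Real.cosh x - 1) * ((x + 2) * (Real.cosh x - 1)) :=
      mul_le_mul_of_nonneg_right (by linarith) (mul_nonneg (by linarith) hD0.le)
    nlinarith [s1, s2]
  calc Real.sinh x / (Real.cosh x - 1) ^ 2 ≤ (2 * x + 4) / x ^ 3 := key
    _ = 2 / x ^ 2 + 4 / x ^ 3 := by field_simp

set_option maxHeartbeats 1000000 in
/-- The key limit in the construction of a curve with vertical tangent and
negative derivative of the horizontal velocity: with `z₁(β) = β - sin β`, the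
contribution of `[0, β₁]` vanishes as the scaling parameter `b` tends to `∞`. -/
theorem inner_integral_vanishes (β₁ : ℝ) (hβ₁ : β₁ ∈ Ioo (0 : ℝ) π) (zs : ℝ → ℝ)
    (hzs : ContDiffOn ℝ 1 zs (Icc (-π) π))
    (hodd : ∀ β ∈ Icc (-π) π, zs (-β) = - zs β)
    (hd : 0 < deriv zs 0)
    (hpos : ∀ β ∈ Ioc (0 : ℝ) β₁, 0 < zs β) :
    Tendsto (fun b : ℝ => ∫ β in (0 : ℝ)..β₁,
        Real.sin (β - Real.sin β) * Real.sinh (b * zs β)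
          / (Real.cosh (b * zs β) - Real.cos (β - Real.sin β)) ^ 2
          * (1 - Real.cos β))
      atTop (𝓝 0) := by
  obtain ⟨hβ0, hβπ⟩ := hβ₁
  have hπ := Real.pi_pos
  -- Step 1: a linear lower bound `c * β ≤ zs β` on `(0, β₁]`.
  obtain ⟨c, hc0, hcz⟩ : ∃ c > 0, ∀ β ∈ Ioc (0:ℝ) β₁, c * β ≤ zs β := by
    have h0 : zs 0 = 0 := by
      have h := hodd 0 ⟨by linarith, hπ.le⟩
      simp only [neg_zero] at h
      linarith
    have hmem : Icc (-π) π ∈ 𝓝 (0 : ℝ) := Icc_mem_nhds (by linarith) hπ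
    have hder : HasDerivAt zs (deriv zs 0) 0 :=
      ((hzs.contDiffAt hmem).differentiableAt one_ne_zero).hasDerivAt
    have hslope : Tendsto (slope zs 0) (𝓝[≠] (0:ℝ)) (𝓝 (deriv zs 0)) :=
      hasDerivAt_iff_tendsto_slope.mp hder
    have hev : ∀ᶠ β in 𝓝[>] (0:ℝ), deriv zs 0 / 2 < slope zs 0 β :=
      (hslope.eventually (eventually_gt_nhds (by linarith))).filter_mono
        (nhdsWithin_mono _ (fun x hx => ne_of_gt hx))
    obtain ⟨δ, hδ, hsub⟩ := mem_nhdsGT_iff_exists_Ioo_subset.mp hev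
    rw [mem_Ioi] at hδ
    set δ' := min (δ / 2) β₁ with hδ'
    have hδ'0 : 0 < δ' := lt_min (by linarith) hβ0
    have hδ'β : δ' ≤ β₁ := min_le_right _ _
    have hKsub : Icc δ' β₁ ⊆ Icc (-π) π := fun x hx =>
      ⟨by linarith [hx.1], le_trans hx.2 hβπ.le⟩
    obtain ⟨m, hmK, hm⟩ := isCompact_Icc.exists_isMinOn (nonempty_Icc.2 hδ'β)
      ((hzs.continuousOn).mono hKsub)
    have hM0 : 0 < zs m := hpos m ⟨lt_of_lt_of_le hδ'0 hmK.1, hmK.2⟩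
    refine ⟨min (deriv zs 0 / 2) (zs m / β₁), lt_min (by linarith) (div_pos hM0 hβ0), ?_⟩
    intro β hβ
    rcases lt_or_ge β δ' with h | h
    · have hβδ : β ∈ Ioo 0 δ := ⟨hβ.1, lt_of_lt_of_le (lt_of_lt_of_le h (min_le_left _ _))
        (by linarith)⟩
      have hs := hsub hβδ
      rw [mem_setOf_eq, slope_def_field, h0, sub_zero, sub_zero] at hs
      have h2 : deriv zs 0 / 2 * β ≤ zs β := by
        rw [← le_div_iff₀ hβ.1]; exact hs.le
      calc min (deriv zs 0 / 2) (zs m / β₁) * β ≤ deriv zs 0 / 2 * β :=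
            mul_le_mul_of_nonneg_right (min_le_left _ _) hβ.1.le
        _ ≤ zs β := h2
    · calc min (deriv zs 0 / 2) (zs m / β₁) * β ≤ zs m / β₁ * β :=
          mul_le_mul_of_nonneg_right (min_le_right _ _) hβ.1.le
        _ ≤ zs m / β₁ * β₁ := mul_le_mul_of_nonneg_left hβ.2 (by positivity)
        _ = zs m := div_mul_cancel₀ _ hβ0.ne'
        _ ≤ zs β := hm ⟨h, hβ.2⟩
  -- Step 2: squeeze with `C / b ^ 2`.
  apply squeeze_zero_norm' (a := fun b : ℝ => β₁ * (β₁ / c ^ 2 + 2 / c ^ 3) / b ^ 2)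
  · filter_upwards [eventually_ge_atTop (1:ℝ)] with b hb
    have hb0 : (0:ℝ) < b := by linarith
    have hbound : ∀ β ∈ Set.uIoc (0:ℝ) β₁,
        ‖Real.sin (β - Real.sin β) * Real.sinh (b * zs β)
          / (Real.cosh (b * zs β) - Real.cos (β - Real.sin β)) ^ 2
          * (1 - Real.cos β)‖ ≤ (β₁ / c ^ 2 + 2 / c ^ 3) / b ^ 2 := by
      intro β hβm
      rw [uIoc_of_le hβ0.le] at hβm
      obtain ⟨hβp, hββ⟩ := hβm
      have hz : 0 < zs β := hpos β ⟨hβp, hββ⟩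
      have hcb : c * β ≤ zs β := hcz β ⟨hβp, hββ⟩
      set x := b * zs β with hxd
      have hx0 : 0 < x := mul_pos hb0 hz
      have hxl : b * (c * β) ≤ x := mul_le_mul_of_nonneg_left hcb hb0.le
      set θ := β - Real.sin β with hθd
      have hsβ : Real.sin β < β := Real.sin_lt hβp
      have hθ0 : 0 ≤ θ := by rw [hθd]; linarith
      have hsinβ0 : 0 ≤ Real.sin β :=
        Real.sin_nonneg_of_nonneg_of_le_pi hβp.le (by linarith)
      have hθβ : θ ≤ β := by rw [hθd]; linarith
      have hθπ : θ ≤ π := le_trans hθβ (by linarith)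
      have hsθ0 : 0 ≤ Real.sin θ := Real.sin_nonneg_of_nonneg_of_le_pi hθ0 hθπ
      have hsθ : Real.sin θ ≤ β := by
        have h1 : |Real.sin θ| ≤ |θ| := Real.abs_sin_le_abs
        rw [abs_of_nonneg hθ0, abs_of_nonneg hsθ0] at h1
        linarith
      have hch : 1 + x ^ 2 / 2 ≤ Real.cosh x := cosh_lower x hx0.le
      have hD1 : 0 < Real.cosh x - 1 := by nlinarith
      have hDc : Real.cosh x - 1 ≤ Real.cosh x - Real.cos θ := by
        linarith [Real.cos_le_one θ]
      have hsh0 : 0 ≤ Real.sinh x := Real.sinh_nonneg_iff.2 hx0.le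
      have hcosβ : 1 - Real.cos β ≤ β ^ 2 / 2 := by
        linarith [Real.one_sub_sq_div_two_le_cos (x := β)]
      have hcosβ0 : 0 ≤ 1 - Real.cos β := by linarith [Real.cos_le_one β]
      have hf0 : 0 ≤ Real.sin θ * Real.sinh x / (Real.cosh x - Real.cos θ) ^ 2
          * (1 - Real.cos β) :=
        mul_nonneg (div_nonneg (mul_nonneg hsθ0 hsh0) (sq_nonneg _)) hcosβ0
      rw [Real.norm_eq_abs, abs_of_nonneg hf0]
      have step1 : Real.sin θ * Real.sinh x / (Real.cosh x - Real.cos θ) ^ 2 ≤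
          β * Real.sinh x / (Real.cosh x - 1) ^ 2 :=
        div_le_div₀ (mul_nonneg hβp.le hsh0) (mul_le_mul_of_nonneg_right hsθ hsh0)
          (by positivity) (pow_le_pow_left₀ hD1.le hDc 2)
      have step2 : β * Real.sinh x / (Real.cosh x - 1) ^ 2 ≤ β * (2 / x ^ 2 + 4 / x ^ 3) := by
        rw [mul_div_assoc]
        exact mul_le_mul_of_nonneg_left (sinh_div_le x hx0) hβp.le
      have step3 : 2 / x ^ 2 + 4 / x ^ 3 ≤ 2 / (b * (c * β)) ^ 2 + 4 / (b * (c * β)) ^ 3 := by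
        gcongr
      have step4 : β * (2 / (b * (c * β)) ^ 2 + 4 / (b * (c * β)) ^ 3) * (β ^ 2 / 2)
          = β / (b ^ 2 * c ^ 2) + 2 / (b ^ 3 * c ^ 3) := by
        field_simp; ring
      have step5 : β / (b ^ 2 * c ^ 2) + 2 / (b ^ 3 * c ^ 3) ≤
          (β₁ / c ^ 2 + 2 / c ^ 3) / b ^ 2 := by
        have e : (β₁ / c ^ 2 + 2 / c ^ 3) / b ^ 2
            = β₁ / (b ^ 2 * c ^ 2) + 2 / (b ^ 2 * c ^ 3) := by field_simp
        rw [e]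
        gcongr
        · norm_num
      calc Real.sin θ * Real.sinh x / (Real.cosh x - Real.cos θ) ^ 2 * (1 - Real.cos β)
          ≤ β * Real.sinh x / (Real.cosh x - 1) ^ 2 * (β ^ 2 / 2) :=
            mul_le_mul step1 hcosβ hcosβ0 (by positivity)
        _ ≤ β * (2 / x ^ 2 + 4 / x ^ 3) * (β ^ 2 / 2) :=
            mul_le_mul_of_nonneg_right step2 (by positivity)
        _ ≤ β * (2 / (b * (c * β)) ^ 2 + 4 / (b * (c * β)) ^ 3) * (β ^ 2 / 2) :=
            mul_le_mul_of_nonneg_right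
              (mul_le_mul_of_nonneg_left step3 hβp.le) (by positivity)
        _ = β / (b ^ 2 * c ^ 2) + 2 / (b ^ 3 * c ^ 3) := step4
        _ ≤ (β₁ / c ^ 2 + 2 / c ^ 3) / b ^ 2 := step5
    calc ‖∫ β in (0:ℝ)..β₁,
          Real.sin (β - Real.sin β) * Real.sinh (b * zs β)
            / (Real.cosh (b * zs β) - Real.cos (β - Real.sin β)) ^ 2
            * (1 - Real.cos β)‖
        ≤ (β₁ / c ^ 2 + 2 / c ^ 3) / b ^ 2 * |β₁ - 0| :=
          intervalIntegral.norm_integral_le_of_norm_le_const hbound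
      _ = β₁ * (β₁ / c ^ 2 + 2 / c ^ 3) / b ^ 2 := by
          rw [sub_zero, abs_of_nonneg hβ0.le]; ring
  · exact (tendsto_pow_atTop two_ne_zero).const_div_atTop _
end
end
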